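/- arXiv:2110.07874 — 3 statements merged into one kernel-verified Lean document; each statement's English description precedes it below -/
import Mathlib

section
/- If there exists a KTS(v) which contains as a subdesign an STS(u), then there exists a KTS(3v) which contains as a subdesign an STS(3u). -/
/-- A parallel class on point set `X`: a set of blocks containing each point of `X`
exactly once. -/
def IsParallelClassOn (X : Finset ℕ) (P : Finset (Finset ℕ)) : Prop :=
  (∀ b ∈ P, b ⊆ X) ∧ ∀ x ∈ X, ∃! b, b ∈ P ∧ x ∈ b

/-- A Steiner triple system on point set `V` with block set `B`: blocks are 3-element
subsets of `V` and every pair of distinct points lies in exactly one block. -/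
def IsSTS (V : Finset ℕ) (B : Finset (Finset ℕ)) : Prop :=
  (∀ b ∈ B, b ⊆ V ∧ b.card = 3) ∧
  ∀ x ∈ V, ∀ y ∈ V, x ≠ y → ∃! b, b ∈ B ∧ x ∈ b ∧ y ∈ b

/-- A resolution of the block set `B` into parallel classes on `X`:
every block lies in exactly one class. -/
def IsResolution (X : Finset ℕ) (B : Finset (Finset ℕ))
    (R : Finset (Finset (Finset ℕ))) : Prop :=
  (∀ P ∈ R, P ⊆ B ∧ IsParallelClassOn X P) ∧ ∀ b ∈ B, ∃! P, P ∈ R ∧ b ∈ P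

/-- A Kirkman triple system: a resolvable Steiner triple system. -/
def IsKTS (V : Finset ℕ) (B : Finset (Finset ℕ)) : Prop :=
  IsSTS V B ∧ ∃ R : Finset (Finset (Finset ℕ)), IsResolution V B R

/-- There exists a KTS of order `v` containing an STS of order `u` as a subdesign. -/
def ExistsKTSSubSTS (v u : ℕ) : Prop :=
  ∃ (V U : Finset ℕ) (B A : Finset (Finset ℕ)),
    IsKTS V B ∧ IsSTS U A ∧ U ⊆ V ∧ A ⊆ B ∧ V.card = v ∧ U.card = u

/-- A uniform 3-GDD of type g^u with groups `G i` and block set `B`: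
groups are disjoint of size `g`, blocks are triples meeting each group at most once,
and every pair of points from distinct groups lies in exactly one block. -/
def IsGDD (g u : ℕ) (G : Fin u → Finset ℕ) (B : Finset (Finset ℕ)) : Prop :=
  (∀ i, (G i).card = g) ∧
  (∀ i j, i ≠ j → Disjoint (G i) (G j)) ∧
  (∀ b ∈ B, b ⊆ Finset.univ.biUnion G ∧ b.card = 3 ∧ ∀ i, (b ∩ G i).card ≤ 1) ∧
  ∀ x y : ℕ, (∃ i j, i ≠ j ∧ x ∈ G i ∧ y ∈ G j) → ∃! b, b ∈ B ∧ x ∈ b ∧ y ∈ b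

/-- A Kirkman frame of type h^u: a 3-GDD of type h^u whose blocks resolve into
partial parallel classes, each a parallel class on the complement of some group. -/
def IsKirkmanFrame (h u : ℕ) (G : Fin u → Finset ℕ) (B : Finset (Finset ℕ)) : Prop :=
  IsGDD h u G B ∧
  ∃ R : Finset (Finset (Finset ℕ)),
    (∀ P ∈ R, P ⊆ B ∧ ∃ i, IsParallelClassOn (Finset.univ.biUnion G \ G i) P) ∧
    ∀ b ∈ B, ∃! P, P ∈ R ∧ b ∈ P

/-- There exists a Kirkman frame of type (g;h)^u: a Kirkman frame of type h^u with
groups `G i` containing as a subdesign a 3-GDD of type g^u with groups `W i ⊆ G i`. -/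
def ExistsFrameSubGDD (g h u : ℕ) : Prop :=
  ∃ (G W : Fin u → Finset ℕ) (B A : Finset (Finset ℕ)),
    IsKirkmanFrame h u G B ∧ IsGDD g u W A ∧ (∀ i, W i ⊆ G i) ∧ A ⊆ B

/-- There exists a resolvable transversal design RTD(3,m): a resolvable 3-GDD of
type m^3. -/
def ExistsRTD3 (m : ℕ) : Prop :=
  ∃ (G : Fin 3 → Finset ℕ) (B : Finset (Finset ℕ)),
    IsGDD m 3 G B ∧
    ∃ R : Finset (Finset (Finset ℕ)), IsResolution (Finset.univ.biUnion G) B R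

/-- A pairwise balanced design PBD(v,K) on point set `X` with block set `B`. -/
def IsPBD (v : ℕ) (K : Set ℕ) (X : Finset ℕ) (B : Finset (Finset ℕ)) : Prop :=
  X.card = v ∧ (∀ b ∈ B, b ⊆ X ∧ b.card ∈ K) ∧
  ∀ x ∈ X, ∀ y ∈ X, x ≠ y → ∃! b, b ∈ B ∧ x ∈ b ∧ y ∈ b

/-- The block set `B` has chromatic index at most `k`: it can be partitioned into at
most `k` partial parallel classes (sets of pairwise disjoint blocks). -/
def ChromIndexLE (B : Finset (Finset ℕ)) (k : ℕ) : Prop :=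
  ∃ R : Finset (Finset (Finset ℕ)), R.card ≤ k ∧
    (∀ P ∈ R, P ⊆ B ∧ ∀ b ∈ P, ∀ c ∈ P, b ≠ c → Disjoint b c) ∧
    ∀ b ∈ B, ∃ P ∈ R, b ∈ P

namespace KTS3

def tri (x : ℕ) : Finset ℕ := {3*x, 3*x+1, 3*x+2}

lemma mem_tri {n x : ℕ} : n ∈ tri x ↔ 3*x ≤ n ∧ n < 3*x+3 := by
  simp [tri]; omega

def ex3 (S : Finset ℕ) : Finset ℕ := S.biUnion tri

lemma mem_ex3 {n : ℕ} {S : Finset ℕ} : n ∈ ex3 S ↔ n / 3 ∈ S ∧ n ∈ tri (n / 3) := by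
  constructor
  · rintro hn
    rw [ex3, Finset.mem_biUnion] at hn
    obtain ⟨x, hx, hnx⟩ := hn
    rw [mem_tri] at hnx
    have : n / 3 = x := by omega
    rw [this]; exact ⟨hx, by rw [mem_tri]; omega⟩
  · rintro ⟨h1, h2⟩
    exact Finset.mem_biUnion.mpr ⟨_, h1, h2⟩

lemma card3 {p q r : ℕ} (h1 : p ≠ q) (h2 : p ≠ r) (h3 : q ≠ r) :
    ({p, q, r} : Finset ℕ).card = 3 := by
  rw [Finset.card_insert_of_notMem (by simp [h1, h2]),
    Finset.card_insert_of_notMem (by simp [h3]), Finset.card_singleton]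

lemma sum3 {M : Type*} [AddCommMonoid M] (f : ℕ → M) {p q r : ℕ}
    (h1 : p ≠ q) (h2 : p ≠ r) (h3 : q ≠ r) :
    ({p, q, r} : Finset ℕ).sum f = f p + f q + f r := by
  rw [Finset.sum_insert (by simp [h1, h2]), Finset.sum_insert (by simp [h3]),
    Finset.sum_singleton, add_assoc]


lemma card_tri (x : ℕ) : (tri x).card = 3 := by
  rw [tri, Finset.card_insert_of_notMem (by simp only [Finset.mem_insert, Finset.mem_singleton]; omega),
    Finset.card_insert_of_notMem (by simp only [Finset.mem_singleton]; omega), Finset.card_singleton]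

lemma tri_disjoint {x y : ℕ} (h : x ≠ y) : Disjoint (tri x) (tri y) := by
  rw [Finset.disjoint_left]
  intro n hn hn'
  rw [mem_tri] at hn hn'
  omega

lemma ex3_mono {S T : Finset ℕ} (h : S ⊆ T) : ex3 S ⊆ ex3 T := by
  intro n hn; rw [mem_ex3] at hn ⊢; exact ⟨h hn.1, hn.2⟩

lemma card_ex3 (S : Finset ℕ) : (ex3 S).card = 3 * S.card := by
  rw [ex3, Finset.card_biUnion (fun x _ y _ hxy => tri_disjoint hxy)]
  simp [card_tri, mul_comm]

/-- The nine transversal-design blocks over a base block `s`. -/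
def tdOf (s : Finset ℕ) : Finset (Finset ℕ) :=
  (ex3 s).powerset.filter
    (fun t => (∀ x ∈ s, (t ∩ tri x).card = 1) ∧ t.sum id % 3 = 0)

lemma mem_tdOf {s t : Finset ℕ} :
    t ∈ tdOf s ↔ t ⊆ ex3 s ∧ (∀ x ∈ s, (t ∩ tri x).card = 1) ∧ t.sum id % 3 = 0 := by
  simp [tdOf, and_assoc]

lemma base_eq {s t : Finset ℕ} (h : t ∈ tdOf s) : t.image (· / 3) = s := by
  rw [mem_tdOf] at h
  apply Finset.Subset.antisymm
  · intro x hx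
    rw [Finset.mem_image] at hx
    obtain ⟨n, hn, rfl⟩ := hx
    exact (mem_ex3.mp (h.1 hn)).1
  · intro x hx
    obtain ⟨n, hn⟩ := Finset.card_eq_one.mp (h.2.1 x hx)
    have hnt : n ∈ t ∩ tri x := hn ▸ Finset.mem_singleton_self n
    rw [Finset.mem_inter, mem_tri] at hnt
    exact Finset.mem_image.mpr ⟨n, hnt.1, by omega⟩

lemma tdOf_inj {s s' t : Finset ℕ} (h : t ∈ tdOf s) (h' : t ∈ tdOf s') : s = s' := by
  rw [← base_eq h, base_eq h']

lemma exists_sorted3 {s : Finset ℕ} (h : s.card = 3) :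
    ∃ a b c : ℕ, a < b ∧ b < c ∧ s = {a, b, c} := by
  obtain ⟨x, y, z, hxy, hxz, hyz, rfl⟩ := Finset.card_eq_three.mp h
  have perm : ∀ a b c : ℕ, ({x, y, z} : Finset ℕ) = {a, b, c} ∨ True → True := fun _ _ _ _ => trivial
  rcases Nat.lt_trichotomy x y with h1 | h1 | h1
  · rcases Nat.lt_trichotomy y z with h2 | h2 | h2
    · exact ⟨x, y, z, h1, h2, rfl⟩
    · omega
    · rcases Nat.lt_trichotomy x z with h3 | h3 | h3
      · exact ⟨x, z, y, h3, h2, by ext n; simp; tauto⟩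
      · omega
      · exact ⟨z, x, y, h3, h1, by ext n; simp; tauto⟩
  · omega
  · rcases Nat.lt_trichotomy x z with h2 | h2 | h2
    · exact ⟨y, x, z, h1, h2, by ext n; simp; tauto⟩
    · omega
    · rcases Nat.lt_trichotomy y z with h3 | h3 | h3
      · exact ⟨y, z, x, h3, h2, by ext n; simp; tauto⟩
      · omega
      · exact ⟨z, y, x, h3, h1, by ext n; simp; tauto⟩

/-- Parametrization of the TD blocks over a sorted base `{a,b,c}`. -/
lemma mem_tdOf_iff {a b c : ℕ} (hab : a < b) (hbc : b < c) {t : Finset ℕ} :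
    t ∈ tdOf {a, b, c} ↔
      ∃ i j k, i < 3 ∧ j < 3 ∧ k < 3 ∧ (i + j + k) % 3 = 0 ∧
        t = {3*a+i, 3*b+j, 3*c+k} := by
  have habc : ex3 {a, b, c} = tri a ∪ tri b ∪ tri c := by
    rw [ex3]; ext n; simp [Finset.mem_biUnion, or_assoc]
  constructor
  · intro ht
    rw [mem_tdOf] at ht
    obtain ⟨hsub, hone, hsum⟩ := ht
    obtain ⟨na, hna⟩ := Finset.card_eq_one.mp (hone a (by simp))
    obtain ⟨nb, hnb⟩ := Finset.card_eq_one.mp (hone b (by simp))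
    obtain ⟨nc, hnc⟩ := Finset.card_eq_one.mp (hone c (by simp [hab.ne', hbc.ne']))
    have hmema : na ∈ t ∩ tri a := hna ▸ Finset.mem_singleton_self na
    have hmemb : nb ∈ t ∩ tri b := hnb ▸ Finset.mem_singleton_self nb
    have hmemc : nc ∈ t ∩ tri c := hnc ▸ Finset.mem_singleton_self nc
    rw [Finset.mem_inter, mem_tri] at hmema hmemb hmemc
    refine ⟨na - 3*a, nb - 3*b, nc - 3*c, by omega, by omega, by omega, ?_, ?_⟩
    · have hteq : t = {na, nb, nc} := by
        apply Finset.Subset.antisymm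
        · intro n hn
          have hn' := hsub hn
          rw [habc] at hn'
          simp only [Finset.mem_union] at hn'
          simp only [Finset.mem_insert, Finset.mem_singleton]
          rcases hn' with (h | h) | h
          · have : n ∈ t ∩ tri a := Finset.mem_inter.mpr ⟨hn, h⟩
            rw [hna, Finset.mem_singleton] at this; tauto
          · have : n ∈ t ∩ tri b := Finset.mem_inter.mpr ⟨hn, h⟩
            rw [hnb, Finset.mem_singleton] at this; tauto
          · have : n ∈ t ∩ tri c := Finset.mem_inter.mpr ⟨hn, h⟩
            rw [hnc, Finset.mem_singleton] at this; tauto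
        · intro n hn
          simp only [Finset.mem_insert, Finset.mem_singleton] at hn
          rcases hn with rfl | rfl | rfl
          · exact hmema.1
          · exact hmemb.1
          · exact hmemc.1
      rw [hteq, sum3 id (by omega) (by omega) (by omega)] at hsum
      simp only [id] at hsum
      omega
    · have hteq : t = {na, nb, nc} := by
        apply Finset.Subset.antisymm
        · intro n hn
          have hn' := hsub hn
          rw [habc] at hn'
          simp only [Finset.mem_union] at hn'
          simp only [Finset.mem_insert, Finset.mem_singleton]
          rcases hn' with (h | h) | h
          · have : n ∈ t ∩ tri a := Finset.mem_inter.mpr ⟨hn, h⟩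
            rw [hna, Finset.mem_singleton] at this; tauto
          · have : n ∈ t ∩ tri b := Finset.mem_inter.mpr ⟨hn, h⟩
            rw [hnb, Finset.mem_singleton] at this; tauto
          · have : n ∈ t ∩ tri c := Finset.mem_inter.mpr ⟨hn, h⟩
            rw [hnc, Finset.mem_singleton] at this; tauto
        · intro n hn
          simp only [Finset.mem_insert, Finset.mem_singleton] at hn
          rcases hn with rfl | rfl | rfl
          · exact hmema.1
          · exact hmemb.1
          · exact hmemc.1
      rw [hteq]
      congr 1 <;> [skip; congr 1] <;> [omega; omega; (rw [Finset.singleton_inj]; omega)]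
  · rintro ⟨i, j, k, hi, hj, hk, hmod, rfl⟩
    rw [mem_tdOf]
    refine ⟨?_, ?_, ?_⟩
    · intro n hn
      simp only [Finset.mem_insert, Finset.mem_singleton] at hn
      rw [habc]
      simp only [Finset.mem_union, mem_tri]
      omega
    · intro x hx
      simp only [Finset.mem_insert, Finset.mem_singleton] at hx
      rcases hx with rfl | rfl | rfl
      · rw [show ({3*x+i, 3*b+j, 3*c+k} : Finset ℕ) ∩ tri x = {3*x+i} from by
          ext n; simp only [Finset.mem_inter, Finset.mem_insert, Finset.mem_singleton, mem_tri]; omega]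
        exact Finset.card_singleton _
      · rw [show ({3*a+i, 3*x+j, 3*c+k} : Finset ℕ) ∩ tri x = {3*x+j} from by
          ext n; simp only [Finset.mem_inter, Finset.mem_insert, Finset.mem_singleton, mem_tri]; omega]
        exact Finset.card_singleton _
      · rw [show ({3*a+i, 3*b+j, 3*x+k} : Finset ℕ) ∩ tri x = {3*x+k} from by
          ext n; simp only [Finset.mem_inter, Finset.mem_insert, Finset.mem_singleton, mem_tri]; omega]
        exact Finset.card_singleton _
    · rw [sum3 id (by omega) (by omega) (by omega)]
      simp only [id]
      omega


/-- Label of a TD block over base `s`, used to split the nine blocks into three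
parallel classes. -/
def lab (s t : Finset ℕ) : ℕ :=
  (t.sum fun n => (n % 3) * ((s.filter (· < n / 3)).card)) % 3

lemma lab_lt (s t : Finset ℕ) : lab s t < 3 := Nat.mod_lt _ (by norm_num)

lemma lab_param {a b c i j k : ℕ} (hab : a < b) (hbc : b < c)
    (hi : i < 3) (hj : j < 3) (hk : k < 3) :
    lab {a, b, c} {3*a+i, 3*b+j, 3*c+k} = (j + 2*k) % 3 := by
  rw [lab, sum3 _ (by omega) (by omega) (by omega)]
  have h1 : (3*a+i) / 3 = a := by omega
  have h2 : (3*b+j) / 3 = b := by omega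
  have h3 : (3*c+k) / 3 = c := by omega
  have e1 : ({a, b, c} : Finset ℕ).filter (· < a) = ∅ := by
    ext n; simp only [Finset.mem_filter, Finset.mem_insert, Finset.mem_singleton,
      Finset.notMem_empty, iff_false]; omega
  have e2 : ({a, b, c} : Finset ℕ).filter (· < b) = {a} := by
    ext n; simp only [Finset.mem_filter, Finset.mem_insert, Finset.mem_singleton]; omega
  have e3 : ({a, b, c} : Finset ℕ).filter (· < c) = {a, b} := by
    ext n; simp only [Finset.mem_filter, Finset.mem_insert, Finset.mem_singleton]; omega
  rw [h1, h2, h3, e1, e2, e3]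
  have c2 : ({a, b} : Finset ℕ).card = 2 := by
    rw [Finset.card_insert_of_notMem (by simp; omega), Finset.card_singleton]
  rw [Finset.card_empty, Finset.card_singleton, c2]
  have m1 : (3*a+i) % 3 = i := by omega
  have m2 : (3*b+j) % 3 = j := by omega
  have m3 : (3*c+k) % 3 = k := by omega
  rw [m1, m2, m3]
  omega

/-- The expanded block set: vertical triples plus TD blocks over each base block. -/
def exB (S : Finset ℕ) (C : Finset (Finset ℕ)) : Finset (Finset ℕ) :=
  S.image tri ∪ C.biUnion tdOf

lemma pair_block {a b c x y : ℕ} (hab : a < b) (hbc : b < c)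
    (hx : x ∈ ex3 ({a, b, c} : Finset ℕ)) (hy : y ∈ ex3 ({a, b, c} : Finset ℕ))
    (hxy : x / 3 ≠ y / 3) :
    ∃! t, t ∈ tdOf {a, b, c} ∧ x ∈ t ∧ y ∈ t := by
  rw [mem_ex3] at hx hy
  have hxt := mem_tri.mp hx.2
  have hyt := mem_tri.mp hy.2
  have hxs : x / 3 = a ∨ x / 3 = b ∨ x / 3 = c := by
    have := hx.1; simp only [Finset.mem_insert, Finset.mem_singleton] at this; exact this
  have hys : y / 3 = a ∨ y / 3 = b ∨ y / 3 = c := by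
    have := hy.1; simp only [Finset.mem_insert, Finset.mem_singleton] at this; exact this
  rcases hxs with hxa | hxa | hxa <;> rcases hys with hya | hya | hya
  · omega
  ·
      refine ⟨{3*a + (x % 3), 3*b + (y % 3), 3*c + ((2 * (x % 3 + y % 3)) % 3)},
        ⟨(mem_tdOf_iff hab hbc).mpr ⟨(x % 3), (y % 3), ((2 * (x % 3 + y % 3)) % 3), by omega, by omega, by omega, by omega, rfl⟩,
         by simp only [Finset.mem_insert, Finset.mem_singleton]; omega,
         by simp only [Finset.mem_insert, Finset.mem_singleton]; omega⟩, ?_⟩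
      rintro t' ⟨ht', hxt', hyt'⟩
      obtain ⟨i', j', k', hi', hj', hk', hm', rfl⟩ := (mem_tdOf_iff hab hbc).mp ht'
      simp only [Finset.mem_insert, Finset.mem_singleton] at hxt' hyt'
      have e1 : i' = (x % 3) := by omega
      have e2 : j' = (y % 3) := by omega
      have e3 : k' = ((2 * (x % 3 + y % 3)) % 3) := by omega
      rw [e1, e2, e3]
  ·
      refine ⟨{3*a + (x % 3), 3*b + ((2 * (x % 3 + y % 3)) % 3), 3*c + (y % 3)},
        ⟨(mem_tdOf_iff hab hbc).mpr ⟨(x % 3), ((2 * (x % 3 + y % 3)) % 3), (y % 3), by omega, by omega, by omega, by omega, rfl⟩,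
         by simp only [Finset.mem_insert, Finset.mem_singleton]; omega,
         by simp only [Finset.mem_insert, Finset.mem_singleton]; omega⟩, ?_⟩
      rintro t' ⟨ht', hxt', hyt'⟩
      obtain ⟨i', j', k', hi', hj', hk', hm', rfl⟩ := (mem_tdOf_iff hab hbc).mp ht'
      simp only [Finset.mem_insert, Finset.mem_singleton] at hxt' hyt'
      have e1 : i' = (x % 3) := by omega
      have e2 : j' = ((2 * (x % 3 + y % 3)) % 3) := by omega
      have e3 : k' = (y % 3) := by omega
      rw [e1, e2, e3]
  ·
      refine ⟨{3*a + (y % 3), 3*b + (x % 3), 3*c + ((2 * (x % 3 + y % 3)) % 3)},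
        ⟨(mem_tdOf_iff hab hbc).mpr ⟨(y % 3), (x % 3), ((2 * (x % 3 + y % 3)) % 3), by omega, by omega, by omega, by omega, rfl⟩,
         by simp only [Finset.mem_insert, Finset.mem_singleton]; omega,
         by simp only [Finset.mem_insert, Finset.mem_singleton]; omega⟩, ?_⟩
      rintro t' ⟨ht', hxt', hyt'⟩
      obtain ⟨i', j', k', hi', hj', hk', hm', rfl⟩ := (mem_tdOf_iff hab hbc).mp ht'
      simp only [Finset.mem_insert, Finset.mem_singleton] at hxt' hyt'
      have e1 : i' = (y % 3) := by omega
      have e2 : j' = (x % 3) := by omega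
      have e3 : k' = ((2 * (x % 3 + y % 3)) % 3) := by omega
      rw [e1, e2, e3]
  · omega
  ·
      refine ⟨{3*a + ((2 * (x % 3 + y % 3)) % 3), 3*b + (x % 3), 3*c + (y % 3)},
        ⟨(mem_tdOf_iff hab hbc).mpr ⟨((2 * (x % 3 + y % 3)) % 3), (x % 3), (y % 3), by omega, by omega, by omega, by omega, rfl⟩,
         by simp only [Finset.mem_insert, Finset.mem_singleton]; omega,
         by simp only [Finset.mem_insert, Finset.mem_singleton]; omega⟩, ?_⟩
      rintro t' ⟨ht', hxt', hyt'⟩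
      obtain ⟨i', j', k', hi', hj', hk', hm', rfl⟩ := (mem_tdOf_iff hab hbc).mp ht'
      simp only [Finset.mem_insert, Finset.mem_singleton] at hxt' hyt'
      have e1 : i' = ((2 * (x % 3 + y % 3)) % 3) := by omega
      have e2 : j' = (x % 3) := by omega
      have e3 : k' = (y % 3) := by omega
      rw [e1, e2, e3]
  ·
      refine ⟨{3*a + (y % 3), 3*b + ((2 * (x % 3 + y % 3)) % 3), 3*c + (x % 3)},
        ⟨(mem_tdOf_iff hab hbc).mpr ⟨(y % 3), ((2 * (x % 3 + y % 3)) % 3), (x % 3), by omega, by omega, by omega, by omega, rfl⟩,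
         by simp only [Finset.mem_insert, Finset.mem_singleton]; omega,
         by simp only [Finset.mem_insert, Finset.mem_singleton]; omega⟩, ?_⟩
      rintro t' ⟨ht', hxt', hyt'⟩
      obtain ⟨i', j', k', hi', hj', hk', hm', rfl⟩ := (mem_tdOf_iff hab hbc).mp ht'
      simp only [Finset.mem_insert, Finset.mem_singleton] at hxt' hyt'
      have e1 : i' = (y % 3) := by omega
      have e2 : j' = ((2 * (x % 3 + y % 3)) % 3) := by omega
      have e3 : k' = (x % 3) := by omega
      rw [e1, e2, e3]
  ·
      refine ⟨{3*a + ((2 * (x % 3 + y % 3)) % 3), 3*b + (y % 3), 3*c + (x % 3)},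
        ⟨(mem_tdOf_iff hab hbc).mpr ⟨((2 * (x % 3 + y % 3)) % 3), (y % 3), (x % 3), by omega, by omega, by omega, by omega, rfl⟩,
         by simp only [Finset.mem_insert, Finset.mem_singleton]; omega,
         by simp only [Finset.mem_insert, Finset.mem_singleton]; omega⟩, ?_⟩
      rintro t' ⟨ht', hxt', hyt'⟩
      obtain ⟨i', j', k', hi', hj', hk', hm', rfl⟩ := (mem_tdOf_iff hab hbc).mp ht'
      simp only [Finset.mem_insert, Finset.mem_singleton] at hxt' hyt'
      have e1 : i' = ((2 * (x % 3 + y % 3)) % 3) := by omega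
      have e2 : j' = (y % 3) := by omega
      have e3 : k' = (x % 3) := by omega
      rw [e1, e2, e3]
  · omega

lemma sts_exp {S : Finset ℕ} {C : Finset (Finset ℕ)} (h : IsSTS S C) :
    IsSTS (ex3 S) (exB S C) := by
  obtain ⟨hblk, hpair⟩ := h
  constructor
  · intro b hb
    rw [exB, Finset.mem_union] at hb
    rcases hb with hb | hb
    · obtain ⟨x, hx, rfl⟩ := Finset.mem_image.mp hb
      exact ⟨fun n hn => Finset.mem_biUnion.mpr ⟨x, hx, hn⟩, card_tri x⟩
    · obtain ⟨s, hs, hts⟩ := Finset.mem_biUnion.mp hb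
      obtain ⟨hsub, hcard⟩ := hblk s hs
      rw [mem_tdOf] at hts
      refine ⟨hts.1.trans (ex3_mono hsub), ?_⟩
      obtain ⟨a, bb, c, hab, hbc, rfl⟩ := exists_sorted3 hcard
      obtain ⟨i, j, k, hi, hj, hk, hm, rfl⟩ := (mem_tdOf_iff hab hbc).mp (mem_tdOf.mpr hts)
      exact card3 (by omega) (by omega) (by omega)
  · intro x hx y hy hxy
    have hx' := mem_ex3.mp hx
    have hy' := mem_ex3.mp hy
    by_cases hbase : x / 3 = y / 3
    · refine ⟨tri (x / 3), ⟨Finset.mem_union_left _ (Finset.mem_image_of_mem tri hx'.1),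
        hx'.2, hbase ▸ hy'.2⟩, ?_⟩
      rintro t ⟨ht, hxt, hyt⟩
      rw [exB, Finset.mem_union] at ht
      rcases ht with ht | ht
      · obtain ⟨z, hz, rfl⟩ := Finset.mem_image.mp ht
        have h1 := mem_tri.mp hxt
        have h2 := mem_tri.mp hx'.2
        have : z = x / 3 := by omega
        rw [this]
      · exfalso
        obtain ⟨s, hs, hts⟩ := Finset.mem_biUnion.mp ht
        obtain ⟨hsub, hcard⟩ := hblk s hs
        obtain ⟨a, bb, c, hab, hbc, rfl⟩ := exists_sorted3 hcard
        obtain ⟨i, j, k, hi, hj, hk, hm, rfl⟩ := (mem_tdOf_iff hab hbc).mp hts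
        simp only [Finset.mem_insert, Finset.mem_singleton] at hxt hyt
        omega
    · obtain ⟨s, ⟨hsC, hxs, hys⟩, huniq⟩ := hpair _ hx'.1 _ hy'.1 hbase
      obtain ⟨hsub, hcard⟩ := hblk s hsC
      obtain ⟨a, bb, c, hab, hbc, rfl⟩ := exists_sorted3 hcard
      have hxe : x ∈ ex3 ({a, bb, c} : Finset ℕ) :=
        mem_ex3.mpr ⟨hxs, hx'.2⟩
      have hye : y ∈ ex3 ({a, bb, c} : Finset ℕ) :=
        mem_ex3.mpr ⟨hys, hy'.2⟩
      obtain ⟨t, ⟨htd, hxt, hyt⟩, htuniq⟩ := pair_block hab hbc hxe hye hbase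
      refine ⟨t, ⟨Finset.mem_union_right _ (Finset.mem_biUnion.mpr ⟨_, hsC, htd⟩), hxt, hyt⟩, ?_⟩
      rintro t' ⟨ht', hxt', hyt'⟩
      rw [exB, Finset.mem_union] at ht'
      rcases ht' with ht' | ht'
      · exfalso
        obtain ⟨z, hz, rfl⟩ := Finset.mem_image.mp ht'
        have h1 := mem_tri.mp hxt'
        have h2 := mem_tri.mp hyt'
        omega
      · obtain ⟨s', hs', hts'⟩ := Finset.mem_biUnion.mp ht'
        have hxb : x / 3 ∈ s' := by
          have := (mem_tdOf.mp hts').1 hxt'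
          exact (mem_ex3.mp this).1
        have hyb : y / 3 ∈ s' := by
          have := (mem_tdOf.mp hts').1 hyt'
          exact (mem_ex3.mp this).1
        have : s' = {a, bb, c} := huniq s' ⟨hs', hxb, hyb⟩
        rw [this] at hts'
        exact htuniq t' ⟨hts', hxt', hyt'⟩

/-- For each point of the expanded base and each label `d < 3`, there is a unique
TD block with that label through the point. -/
lemma point_block {a b c n d : ℕ} (hab : a < b) (hbc : b < c) (hd : d < 3)
    (hn : n ∈ ex3 ({a, b, c} : Finset ℕ)) :
    ∃! t, t ∈ tdOf {a, b, c} ∧ lab {a, b, c} t = d ∧ n ∈ t := by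
  rw [mem_ex3] at hn
  have hnt := mem_tri.mp hn.2
  have hns : n / 3 = a ∨ n / 3 = b ∨ n / 3 = c := by
    have := hn.1; simp only [Finset.mem_insert, Finset.mem_singleton] at this; exact this
  rcases hns with hna | hna | hna
  ·
      refine ⟨{3*a + (n % 3), 3*b + ((2 * (n % 3 + (d + n % 3) % 3)) % 3), 3*c + ((d + n % 3) % 3)},
        ⟨(mem_tdOf_iff hab hbc).mpr ⟨(n % 3), ((2 * (n % 3 + (d + n % 3) % 3)) % 3), ((d + n % 3) % 3), by omega, by omega, by omega, by omega, rfl⟩,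
         by rw [lab_param hab hbc (by omega) (by omega) (by omega)]; omega,
         by simp only [Finset.mem_insert, Finset.mem_singleton]; omega⟩, ?_⟩
      rintro t' ⟨ht', hlt', hnt'⟩
      obtain ⟨i', j', k', hi', hj', hk', hm', rfl⟩ := (mem_tdOf_iff hab hbc).mp ht'
      rw [lab_param hab hbc hi' hj' hk'] at hlt'
      simp only [Finset.mem_insert, Finset.mem_singleton] at hnt'
      have e1 : i' = (n % 3) := by omega
      have e2 : j' = ((2 * (n % 3 + (d + n % 3) % 3)) % 3) := by omega
      have e3 : k' = ((d + n % 3) % 3) := by omega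
      rw [e1, e2, e3]
  ·
      refine ⟨{3*a + ((2 * (n % 3 + (2 * d + 6 - 2 * (n % 3)) % 3)) % 3), 3*b + (n % 3), 3*c + ((2 * d + 6 - 2 * (n % 3)) % 3)},
        ⟨(mem_tdOf_iff hab hbc).mpr ⟨((2 * (n % 3 + (2 * d + 6 - 2 * (n % 3)) % 3)) % 3), (n % 3), ((2 * d + 6 - 2 * (n % 3)) % 3), by omega, by omega, by omega, by omega, rfl⟩,
         by rw [lab_param hab hbc (by omega) (by omega) (by omega)]; omega,
         by simp only [Finset.mem_insert, Finset.mem_singleton]; omega⟩, ?_⟩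
      rintro t' ⟨ht', hlt', hnt'⟩
      obtain ⟨i', j', k', hi', hj', hk', hm', rfl⟩ := (mem_tdOf_iff hab hbc).mp ht'
      rw [lab_param hab hbc hi' hj' hk'] at hlt'
      simp only [Finset.mem_insert, Finset.mem_singleton] at hnt'
      have e1 : i' = ((2 * (n % 3 + (2 * d + 6 - 2 * (n % 3)) % 3)) % 3) := by omega
      have e2 : j' = (n % 3) := by omega
      have e3 : k' = ((2 * d + 6 - 2 * (n % 3)) % 3) := by omega
      rw [e1, e2, e3]
  ·
      refine ⟨{3*a + ((2 * ((d + n % 3) % 3 + n % 3)) % 3), 3*b + ((d + n % 3) % 3), 3*c + (n % 3)},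
        ⟨(mem_tdOf_iff hab hbc).mpr ⟨((2 * ((d + n % 3) % 3 + n % 3)) % 3), ((d + n % 3) % 3), (n % 3), by omega, by omega, by omega, by omega, rfl⟩,
         by rw [lab_param hab hbc (by omega) (by omega) (by omega)]; omega,
         by simp only [Finset.mem_insert, Finset.mem_singleton]; omega⟩, ?_⟩
      rintro t' ⟨ht', hlt', hnt'⟩
      obtain ⟨i', j', k', hi', hj', hk', hm', rfl⟩ := (mem_tdOf_iff hab hbc).mp ht'
      rw [lab_param hab hbc hi' hj' hk'] at hlt'
      simp only [Finset.mem_insert, Finset.mem_singleton] at hnt'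
      have e1 : i' = ((2 * ((d + n % 3) % 3 + n % 3)) % 3) := by omega
      have e2 : j' = ((d + n % 3) % 3) := by omega
      have e3 : k' = (n % 3) := by omega
      rw [e1, e2, e3]

lemma td_ne_tri {s t : Finset ℕ} (hcard : s.card = 3) (ht : t ∈ tdOf s) (x : ℕ) :
    t ≠ tri x := by
  obtain ⟨a, b, c, hab, hbc, rfl⟩ := exists_sorted3 hcard
  obtain ⟨i, j, k, hi, hj, hk, hm, rfl⟩ := (mem_tdOf_iff hab hbc).mp ht
  intro he
  have h1 : 3*a+i ∈ tri x := he ▸ (by simp)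
  have h2 : 3*b+j ∈ tri x := he ▸ (by simp)
  rw [mem_tri] at h1 h2
  omega

/-- A partial parallel class of the expansion: blocks with label `d` over bases in `P`. -/
def clsOf (P : Finset (Finset ℕ)) (d : ℕ) : Finset (Finset ℕ) :=
  P.biUnion fun s => (tdOf s).filter fun t => lab s t = d

lemma mem_clsOf {P : Finset (Finset ℕ)} {d : ℕ} {t : Finset ℕ} :
    t ∈ clsOf P d ↔ ∃ s ∈ P, t ∈ tdOf s ∧ lab s t = d := by
  simp [clsOf]

/-- The resolution of the expanded design. -/
def exR (V : Finset ℕ) (R : Finset (Finset (Finset ℕ))) : Finset (Finset (Finset ℕ)) :=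
  insert (V.image tri) (R.biUnion fun P => ({0, 1, 2} : Finset ℕ).image (clsOf P))

lemma res_exp {V : Finset ℕ} {B : Finset (Finset ℕ)} {R : Finset (Finset (Finset ℕ))}
    (hsts : IsSTS V B) (hres : IsResolution V B R) :
    IsResolution (ex3 V) (exB V B) (exR V R) := by
  obtain ⟨hblk, _⟩ := hsts
  obtain ⟨hcls, hbuniq⟩ := hres
  constructor
  · intro P' hP'
    rw [exR, Finset.mem_insert] at hP'
    rcases hP' with rfl | hP'
    · refine ⟨fun t ht => Finset.mem_union_left _ ht, ?_, ?_⟩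
      · intro t ht
        obtain ⟨x, hx, rfl⟩ := Finset.mem_image.mp ht
        intro m hm
        rw [mem_tri] at hm
        rw [mem_ex3]
        have h3 : m / 3 = x := by omega
        rw [h3]
        exact ⟨hx, by rw [mem_tri]; omega⟩
      · intro n hn
        have hn' := mem_ex3.mp hn
        refine ⟨tri (n / 3), ⟨Finset.mem_image_of_mem tri hn'.1, hn'.2⟩, ?_⟩
        rintro t ⟨ht, hnt⟩
        obtain ⟨z, hz, rfl⟩ := Finset.mem_image.mp ht
        have h1 := mem_tri.mp hnt
        have h2 := mem_tri.mp hn'.2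
        have : z = n / 3 := by omega
        rw [this]
    · obtain ⟨P, hPR, hP'⟩ := Finset.mem_biUnion.mp hP'
      obtain ⟨d, hd, rfl⟩ := Finset.mem_image.mp hP'
      have hd3 : d < 3 := by
        simp only [Finset.mem_insert, Finset.mem_singleton] at hd; omega
      obtain ⟨hPB, hPblk, hPpt⟩ := hcls P hPR
      constructor
      · intro t ht
        obtain ⟨s, hsP, hts, _⟩ := mem_clsOf.mp ht
        exact Finset.mem_union_right _ (Finset.mem_biUnion.mpr ⟨s, hPB hsP, hts⟩)
      constructor
      · intro t ht
        obtain ⟨s, hsP, hts, _⟩ := mem_clsOf.mp ht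
        exact ((mem_tdOf.mp hts).1).trans (ex3_mono (hblk s (hPB hsP)).1)
      · intro n hn
        have hn' := mem_ex3.mp hn
        obtain ⟨s, ⟨hsP, hns⟩, hsuniq⟩ := hPpt (n / 3) hn'.1
        obtain ⟨a, b, c, hab, hbc, hseq⟩ := exists_sorted3 (hblk s (hPB hsP)).2
        subst hseq
        have hne : n ∈ ex3 ({a, b, c} : Finset ℕ) := mem_ex3.mpr ⟨hns, hn'.2⟩
        obtain ⟨t, ⟨htd, hlt, hnt⟩, htuniq⟩ := point_block hab hbc hd3 hne
        refine ⟨t, ⟨mem_clsOf.mpr ⟨_, hsP, htd, hlt⟩, hnt⟩, ?_⟩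
        rintro t' ⟨ht', hnt'⟩
        obtain ⟨s', hs'P, hts', hlt'⟩ := mem_clsOf.mp ht'
        have hns' : n / 3 ∈ s' := (mem_ex3.mp ((mem_tdOf.mp hts').1 hnt')).1
        have : s' = {a, b, c} := hsuniq s' ⟨hs'P, hns'⟩
        subst this
        exact htuniq t' ⟨hts', hlt', hnt'⟩
  · intro t ht
    rw [exB, Finset.mem_union] at ht
    rcases ht with ht | ht
    · obtain ⟨x, hx, rfl⟩ := Finset.mem_image.mp ht
      refine ⟨V.image tri, ⟨Finset.mem_insert_self _ _, Finset.mem_image_of_mem tri hx⟩, ?_⟩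
      rintro P'' ⟨hP'', htP''⟩
      rw [exR, Finset.mem_insert] at hP''
      rcases hP'' with rfl | hP''
      · rfl
      · exfalso
        obtain ⟨P, hPR, hP''⟩ := Finset.mem_biUnion.mp hP''
        obtain ⟨d, _, rfl⟩ := Finset.mem_image.mp hP''
        obtain ⟨s, hsP, hts, _⟩ := mem_clsOf.mp htP''
        exact td_ne_tri (hblk s ((hcls P hPR).1 hsP)).2 hts x rfl
    · obtain ⟨s, hsB, hts⟩ := Finset.mem_biUnion.mp ht
      obtain ⟨P, ⟨hPR, hsP⟩, hPuniq⟩ := hbuniq s hsB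
      have hdmem : lab s t ∈ ({0, 1, 2} : Finset ℕ) := by
        have := lab_lt s t
        simp only [Finset.mem_insert, Finset.mem_singleton]
        omega
      refine ⟨clsOf P (lab s t), ⟨Finset.mem_insert_of_mem (Finset.mem_biUnion.mpr
        ⟨P, hPR, Finset.mem_image_of_mem _ hdmem⟩), mem_clsOf.mpr ⟨s, hsP, hts, rfl⟩⟩, ?_⟩
      rintro P'' ⟨hP'', htP''⟩
      rw [exR, Finset.mem_insert] at hP''
      rcases hP'' with rfl | hP''
      · exfalso
        obtain ⟨x, hx, hteq⟩ := Finset.mem_image.mp htP''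
        exact td_ne_tri (hblk s hsB).2 hts x hteq.symm
      · obtain ⟨Q, hQR, hQ⟩ := Finset.mem_biUnion.mp hP''
        obtain ⟨e, he, rfl⟩ := Finset.mem_image.mp hQ
        obtain ⟨s', hs'Q, hts', hlt'⟩ := mem_clsOf.mp htP''
        have hss' : s' = s := tdOf_inj hts' hts
        have hQP : Q = P := hPuniq Q ⟨hQR, hss' ▸ hs'Q⟩
        have he' : e = lab s t := by rw [← hlt', hss']
        rw [hQP, he']

theorem stmt12' (v u : ℕ) (h : ExistsKTSSubSTS v u) :
    ExistsKTSSubSTS (3 * v) (3 * u) := by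
  obtain ⟨V, U, B, A, ⟨hstsB, R, hres⟩, hstsA, hUV, hAB, hV, hU⟩ := h
  refine ⟨ex3 V, ex3 U, exB V B, exB U A,
    ⟨sts_exp hstsB, exR V R, res_exp hstsB hres⟩, sts_exp hstsA, ex3_mono hUV,
    Finset.union_subset_union (Finset.image_subset_image hUV)
      (Finset.biUnion_subset_biUnion_of_subset_left _ hAB),
    by rw [card_ex3, hV], by rw [card_ex3, hU]⟩

end KTS3

/-- If there exists a KTS(v) containing an STS(u) as a subdesign, then there exists
a KTS(3v) containing an STS(3u) as a subdesign. -/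
theorem stmt12 (v u : ℕ) (h : ExistsKTSSubSTS v u) :
    ExistsKTSSubSTS (3 * v) (3 * u) := by
  exact KTS3.stmt12' v u h
end

section
/- If there exists a Kirkman frame of type 6^n which contains as a subdesign a 3-GDD of type 3^n, then there exists a KTS(6n+3) which contains as a subdesign an STS(3n). -/
namespace KF13

abbrev P3 := ZMod 3 × ZMod 3

def D : List P3 := [(0,1),(1,0),(1,1),(1,2)]

def lineOf (p d : P3) : Finset P3 := {p, p + d, p - d}

def cls (d : P3) : Finset (Finset P3) := Finset.univ.image (fun p => lineOf p d)

def L : Finset (Finset P3) := D.toFinset.biUnion cls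

def e0 : P3 := (0,1)

lemma z6 : ∀ d : P3, d + d = -d := by decide
lemma zD0 : ∀ d ∈ D, d ≠ 0 ∧ d + d ≠ 0 := by decide
lemma zDrep : ∀ v : P3, v ≠ 0 → ∃ d ∈ D, v = d ∨ v = -d := by decide
lemma zDuniq : ∀ d ∈ D, ∀ d' ∈ D, (d = d' ∨ d = -d') → d = d' := by decide
lemma ztri : ∀ a : ZMod 3, a = 0 ∨ a = 1 ∨ a = 2 := by decide
lemma z4 : ∀ a b : ZMod 3, b = a ∨ b = a + 1 ∨ b = a - 1 := by decide
lemma zD1 : ∀ d ∈ D, d ≠ e0 → d.1 = 1 := by decide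
lemma ze0D : e0 ∈ D := by decide

lemma mem_lineOf {x p d : P3} : x ∈ lineOf p d ↔ x = p ∨ x = p + d ∨ x = p - d := by
  simp [lineOf]

lemma self_mem_lineOf (p d : P3) : p ∈ lineOf p d := mem_lineOf.2 (Or.inl rfl)

lemma add_add_eq (p d : P3) : p + d + d = p - d := by
  rw [add_assoc, z6, sub_eq_add_neg]

lemma sub_sub_eq (p d : P3) : p - d - d = p + d := by
  rw [sub_sub, z6, sub_neg_eq_add]

lemma lineOf_shift_add (p d : P3) : lineOf (p + d) d = lineOf p d := by
  ext x
  rw [mem_lineOf, mem_lineOf, add_add_eq, add_sub_cancel_right]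
  tauto

lemma lineOf_shift_sub (p d : P3) : lineOf (p - d) d = lineOf p d := by
  ext x
  rw [mem_lineOf, mem_lineOf, sub_sub_eq, sub_add_cancel]
  tauto

lemma lineOf_eq_of_mem {x p d : P3} (h : x ∈ lineOf p d) : lineOf x d = lineOf p d := by
  rcases mem_lineOf.1 h with h | h | h <;> subst h
  · rfl
  · exact lineOf_shift_add p d
  · exact lineOf_shift_sub p d

lemma card_lineOf {d : P3} (hd : d ∈ D) (p : P3) : (lineOf p d).card = 3 := by
  obtain ⟨h0, h2⟩ := zD0 d hd
  refine Finset.card_eq_three.2 ⟨p, p + d, p - d, ?_, ?_, ?_, rfl⟩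
  · intro h; exact h0 (by linear_combination -h)
  · intro h; exact h0 (by linear_combination h)
  · intro h; exact h2 (by linear_combination h)

lemma diff_of_mem {x y p d : P3} (hx : x ∈ lineOf p d) (hy : y ∈ lineOf p d)
    (hxy : x ≠ y) : y - x = d ∨ y - x = -d := by
  have h6 := z6 d
  rcases mem_lineOf.1 hx with h | h | h <;> rcases mem_lineOf.1 hy with h' | h' | h' <;>
    subst h <;> subst h' <;> first
      | exact absurd rfl hxy
      | (left; ring1)
      | (right; ring1)
      | (left; linear_combination h6)
      | (right; linear_combination h6)
      | (left; linear_combination -h6)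

lemma mem_cls {l : Finset P3} {d : P3} : l ∈ cls d ↔ ∃ p, l = lineOf p d := by
  simp [cls, eq_comm]

lemma lineOf_mem_cls (p d : P3) : lineOf p d ∈ cls d := mem_cls.2 ⟨p, rfl⟩

lemma mem_L {l : Finset P3} : l ∈ L ↔ ∃ d ∈ D, ∃ p, l = lineOf p d := by
  simp [L, mem_cls]

lemma cls_subset_L {d : P3} (hd : d ∈ D) : cls d ⊆ L := by
  intro l hl
  exact Finset.mem_biUnion.2 ⟨d, List.mem_toFinset.2 hd, hl⟩

/-- every point is in a unique line of each class -/
lemma cls_parallel (d : P3) (x : P3) :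
    (lineOf x d ∈ cls d ∧ x ∈ lineOf x d) ∧
      ∀ l ∈ cls d, x ∈ l → l = lineOf x d := by
  refine ⟨⟨lineOf_mem_cls x d, self_mem_lineOf x d⟩, ?_⟩
  intro l hl hx
  obtain ⟨p, rfl⟩ := mem_cls.1 hl
  exact (lineOf_eq_of_mem hx).symm

lemma L_cover {x y : P3} (hxy : x ≠ y) : ∃ d ∈ D, x ∈ lineOf x d ∧ y ∈ lineOf x d := by
  obtain ⟨d, hd, h | h⟩ := zDrep (y - x) (sub_ne_zero.2 (Ne.symm hxy))
  · exact ⟨d, hd, self_mem_lineOf x d, mem_lineOf.2 (Or.inr (Or.inl (by linear_combination h)))⟩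
  · exact ⟨d, hd, self_mem_lineOf x d, mem_lineOf.2 (Or.inr (Or.inr (by linear_combination h)))⟩

lemma L_uniq {x y : P3} (hxy : x ≠ y) {l1 l2 : Finset P3} (h1 : l1 ∈ L) (h2 : l2 ∈ L)
    (hx1 : x ∈ l1) (hy1 : y ∈ l1) (hx2 : x ∈ l2) (hy2 : y ∈ l2) : l1 = l2 := by
  obtain ⟨d1, hd1, p1, rfl⟩ := mem_L.1 h1
  obtain ⟨d2, hd2, p2, rfl⟩ := mem_L.1 h2
  have hdd : d1 = d2 := by
    apply zDuniq d1 hd1 d2 hd2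
    rcases diff_of_mem hx1 hy1 hxy with e1 | e1 <;> rcases diff_of_mem hx2 hy2 hxy with e2 | e2 <;>
      first
        | (left; linear_combination e2 - e1)
        | (left; linear_combination e1 - e2)
        | (right; linear_combination e2 - e1)
        | (right; linear_combination e1 - e2)
  subst hdd
  calc lineOf p1 d1 = lineOf x d1 := (lineOf_eq_of_mem hx1).symm
    _ = lineOf p2 d1 := lineOf_eq_of_mem hx2

lemma cls_uniq {l : Finset P3} {d1 d2 : P3} (hd1 : d1 ∈ D) (hd2 : d2 ∈ D)
    (h1 : l ∈ cls d1) (h2 : l ∈ cls d2) : d1 = d2 := by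
  obtain ⟨p, rfl⟩ := mem_cls.1 h1
  obtain ⟨q, hq⟩ := mem_cls.1 h2
  have hp : p ∈ lineOf q d2 := hq ▸ self_mem_lineOf p d1
  have hpd : p + d1 ∈ lineOf q d2 := hq ▸ mem_lineOf.2 (Or.inr (Or.inl rfl))
  have hne : p ≠ p + d1 := fun h => (zD0 d1 hd1).1 (by linear_combination -h)
  have := diff_of_mem hp hpd hne
  apply zDuniq d1 hd1 d2 hd2
  rcases this with e | e
  · left; linear_combination e
  · right; linear_combination e

lemma mem_row {x p : P3} : x ∈ lineOf p e0 ↔ x.1 = p.1 := by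
  constructor
  · intro h
    rcases mem_lineOf.1 h with h | h | h <;> subst h <;> simp [e0]
  · intro h
    rcases z4 p.2 x.2 with h2 | h2 | h2 <;> rw [mem_lineOf]
    · exact Or.inl (Prod.ext h h2)
    · exact Or.inr (Or.inl (Prod.ext (by simp [e0, h]) (by simp [e0, h2])))
    · exact Or.inr (Or.inr (Prod.ext (by simp [e0, h]) (by simp [e0, h2])))


/-! ### generic helpers -/

/-- the k-th element of a finset of naturals in sorted order -/
def pick (s : Finset ℕ) (k : ℕ) : ℕ := (s.sort (· ≤ ·)).getD k 0

lemma three_pick (s : Finset ℕ) (h : s.card = 3) :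
    s = {pick s 0, pick s 1, pick s 2} ∧
      pick s 0 ≠ pick s 1 ∧ pick s 0 ≠ pick s 2 ∧ pick s 1 ≠ pick s 2 := by
  have hlen : (s.sort (· ≤ ·)).length = 3 := by rw [Finset.length_sort]; exact h
  obtain ⟨a, b, c, habc⟩ := List.length_eq_three.1 hlen
  have hnd : (s.sort (· ≤ ·)).Nodup := s.sort_nodup _
  rw [habc] at hnd
  simp only [List.nodup_cons, List.mem_cons, List.mem_singleton, List.not_mem_nil,
    List.nodup_nil, or_false, not_or] at hnd
  have h0 : pick s 0 = a := by simp [pick, habc]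
  have h1 : pick s 1 = b := by simp [pick, habc]
  have h2 : pick s 2 = c := by simp [pick, habc]
  have hs : s = {a, b, c} := by
    have := s.sort_toFinset (· ≤ ·)
    rw [habc] at this
    rw [← this]
    simp
  rw [h0, h1, h2]
  exact ⟨hs, hnd.1.1, hnd.1.2, hnd.2.1⟩

lemma parallel_union {X Y : Finset ℕ} {P Q : Finset (Finset ℕ)} (hXY : ∀ a ∈ X, a ∉ Y)
    (hP : IsParallelClassOn X P) (hQ : IsParallelClassOn Y Q) :
    IsParallelClassOn (X ∪ Y) (P ∪ Q) := by
  obtain ⟨hP1, hP2⟩ := hP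
  obtain ⟨hQ1, hQ2⟩ := hQ
  constructor
  · intro b hb
    rcases Finset.mem_union.1 hb with hb | hb
    · exact (hP1 b hb).trans Finset.subset_union_left
    · exact (hQ1 b hb).trans Finset.subset_union_right
  · intro x hx
    rcases Finset.mem_union.1 hx with hx | hx
    · obtain ⟨b, ⟨hb, hxb⟩, hbu⟩ := hP2 x hx
      refine ⟨b, ⟨Finset.mem_union_left _ hb, hxb⟩, ?_⟩
      rintro c ⟨hc, hxc⟩
      rcases Finset.mem_union.1 hc with hc | hc
      · exact hbu c ⟨hc, hxc⟩
      · exact absurd (hQ1 c hc hxc) (hXY x hx)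
    · obtain ⟨b, ⟨hb, hxb⟩, hbu⟩ := hQ2 x hx
      refine ⟨b, ⟨Finset.mem_union_right _ hb, hxb⟩, ?_⟩
      rintro c ⟨hc, hxc⟩
      rcases Finset.mem_union.1 hc with hc | hc
      · exact absurd hx (hXY _ (hP1 c hc hxc))
      · exact hbu c ⟨hc, hxc⟩

/-! ### enumeration of the partial parallel classes of a Kirkman frame of type 6^n -/

open Classical in
lemma frame_enum (n : ℕ) (hn : 0 < n) (G : Fin n → Finset ℕ) (B : Finset (Finset ℕ))
    (hGcard : ∀ i, (G i).card = 6) (hdisj : ∀ i j, i ≠ j → Disjoint (G i) (G j))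
    (hB : ∀ b ∈ B, b ⊆ Finset.univ.biUnion G ∧ b.card = 3 ∧ ∀ i, (b ∩ G i).card ≤ 1)
    (hpair : ∀ x y : ℕ, (∃ i j, i ≠ j ∧ x ∈ G i ∧ y ∈ G j) → ∃! b, b ∈ B ∧ x ∈ b ∧ y ∈ b)
    (R : Finset (Finset (Finset ℕ)))
    (hR1 : ∀ P ∈ R, P ⊆ B ∧ ∃ i, IsParallelClassOn (Finset.univ.biUnion G \ G i) P)
    (hR2 : ∀ b ∈ B, ∃! P, P ∈ R ∧ b ∈ P) :
    ∃ r : Fin n → Fin 3 → Finset (Finset ℕ),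
      (∀ i j, r i j ⊆ B ∧ IsParallelClassOn (Finset.univ.biUnion G \ G i) (r i j)) ∧
      (∀ b ∈ B, ∃ i j, b ∈ r i j) ∧
      (∀ b i j i' j', b ∈ r i j → b ∈ r i' j' → i = i' ∧ j = j') := by
  set V0 : Finset ℕ := Finset.univ.biUnion G with hV0
  have hGV0 : ∀ i, G i ⊆ V0 := fun i => Finset.subset_biUnion_of_mem G (Finset.mem_univ i)
  have hGroup : ∀ x ∈ V0, ∃ i, x ∈ G i := by
    intro x hx
    obtain ⟨i, _, hi⟩ := Finset.mem_biUnion.1 hx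
    exact ⟨i, hi⟩
  have hGne : ∀ i, (G i).Nonempty := fun i => Finset.card_pos.1 (by rw [hGcard i]; norm_num)
  have huniqGroup : ∀ x, ∀ i j, x ∈ G i → x ∈ G j → i = j := by
    intro x i j hi hj
    by_contra hij
    exact Finset.disjoint_left.1 (hdisj i j hij) hi hj
  rcases eq_or_lt_of_le (show 1 ≤ n from hn) with hn1 | hn2
  · -- n = 1 : there are no blocks at all
    have i0 : Fin n := ⟨0, hn⟩
    have hBempty : ∀ b ∈ B, False := by
      intro b hb
      obtain ⟨hbV, hb3, hbG⟩ := hB b hb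
      have hsub : b ⊆ G i0 := by
        intro x hx
        obtain ⟨i, hi⟩ := hGroup x (hbV hx)
        have : i = i0 := by
          apply Fin.ext; omega
        rwa [this] at hi
      have : b ∩ G i0 = b := Finset.inter_eq_left.2 hsub
      have := hbG i0
      rw [Finset.inter_eq_left.2 hsub] at this
      omega
    refine ⟨fun _ _ => ∅, ?_, ?_, ?_⟩
    · intro i j
      refine ⟨Finset.empty_subset _, fun b hb => absurd hb (Finset.notMem_empty b), ?_⟩
      intro x hx
      rw [Finset.mem_sdiff] at hx
      obtain ⟨k, hk⟩ := hGroup x hx.1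
      have : k = i := by apply Fin.ext; omega
      exact absurd (this ▸ hk) hx.2
    · intro b hb; exact absurd (hBempty b hb) not_false
    · intro b i j i' j' hb _; exact absurd hb (Finset.notMem_empty b)
  · -- n ≥ 2
    -- each class misses a unique group
    have hmissUniq : ∀ P, ∀ i j, IsParallelClassOn (V0 \ G i) P →
        IsParallelClassOn (V0 \ G j) P → i = j := by
      intro P i j hi hj
      by_contra hij
      obtain ⟨x, hx⟩ := hGne j
      have hxV : x ∈ V0 \ G i := Finset.mem_sdiff.2 ⟨hGV0 j hx,
        fun hxi => Finset.disjoint_left.1 (hdisj i j hij) hxi hx⟩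
      obtain ⟨b, ⟨hbP, hxb⟩, _⟩ := hi.2 x hxV
      have : b ⊆ V0 \ G j := hj.1 b hbP
      exact (Finset.mem_sdiff.1 (this hxb)).2 hx
    set missOf : Finset (Finset ℕ) → Fin n := fun P =>
      if h : ∃ i, IsParallelClassOn (V0 \ G i) P then h.choose else ⟨0, hn⟩ with hmiss
    have hmissSpec : ∀ P ∈ R, IsParallelClassOn (V0 \ G (missOf P)) P := by
      intro P hP
      obtain ⟨-, hex⟩ := hR1 P hP
      simp only [hmiss, dif_pos hex]
      exact hex.choose_spec
    have hmissEq : ∀ P ∈ R, ∀ i, IsParallelClassOn (V0 \ G i) P → missOf P = i :=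
      fun P hP i hi => hmissUniq P _ i (hmissSpec P hP) hi
    -- number of blocks through a point
    have hV0card : V0.card = 6 * n := by
      rw [hV0, Finset.card_biUnion (fun i _ j _ hij => hdisj i j hij)]
      simp [hGcard, mul_comm]
    have hblocks : ∀ i, ∀ x ∈ G i, (B.filter (fun b => x ∈ b)).card = 3 * n - 3 := by
      intro i x hx
      set T := B.filter (fun b => x ∈ b) with hT
      have hTmem : ∀ b, b ∈ T ↔ b ∈ B ∧ x ∈ b := by simp [hT]
      have hbiU : T.biUnion (fun b => b.erase x) = V0 \ G i := by
        ext y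
        constructor
        · intro hy
          obtain ⟨b, hbT, hyb⟩ := Finset.mem_biUnion.1 hy
          obtain ⟨hbB, hxb⟩ := hTmem b |>.1 hbT
          have hyx : y ≠ x := Finset.ne_of_mem_erase hyb
          have hyb' : y ∈ b := Finset.mem_of_mem_erase hyb
          refine Finset.mem_sdiff.2 ⟨(hB b hbB).1 hyb', fun hyGi => ?_⟩
          have hsub : ({x, y} : Finset ℕ) ⊆ b ∩ G i := by
            intro z hz
            rcases Finset.mem_insert.1 hz with rfl | hz
            · exact Finset.mem_inter.2 ⟨hxb, hx⟩
            · rw [Finset.mem_singleton.1 hz]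
              exact Finset.mem_inter.2 ⟨hyb', hyGi⟩
          have h2 : ({x, y} : Finset ℕ).card = 2 := by
            rw [Finset.card_insert_of_notMem (by simpa using (Ne.symm hyx)), Finset.card_singleton]
          have := Finset.card_le_card hsub
          have := (hB b hbB).2.2 i
          omega
        · intro hy
          obtain ⟨hyV, hyGi⟩ := Finset.mem_sdiff.1 hy
          obtain ⟨j, hj⟩ := hGroup y hyV
          have hij : i ≠ j := fun h => hyGi (h ▸ hj)
          obtain ⟨b, ⟨hbB, hxb, hyb⟩, -⟩ := hpair x y ⟨i, j, hij, hx, hj⟩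
          refine Finset.mem_biUnion.2 ⟨b, hTmem b |>.2 ⟨hbB, hxb⟩, Finset.mem_erase.2 ⟨?_, hyb⟩⟩
          exact fun h => hyGi (h ▸ hx)
      have hdisjT : ∀ b ∈ T, ∀ c ∈ T, b ≠ c → Disjoint (b.erase x) (c.erase x) := by
        intro b hb c hc hbc
        rw [Finset.disjoint_left]
        intro y hyb hyc
        obtain ⟨hbB, hxb⟩ := hTmem b |>.1 hb
        obtain ⟨hcB, hxc⟩ := hTmem c |>.1 hc
        have hyx : y ≠ x := Finset.ne_of_mem_erase hyb
        have hyb' : y ∈ b := Finset.mem_of_mem_erase hyb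
        have hyc' : y ∈ c := Finset.mem_of_mem_erase hyc
        -- y is in some other group
        have hyV : y ∈ V0 \ G i := by
          rw [← hbiU]
          exact Finset.mem_biUnion.2 ⟨b, hb, hyb⟩
        obtain ⟨hyV0, hyGi⟩ := Finset.mem_sdiff.1 hyV
        obtain ⟨j, hj⟩ := hGroup y hyV0
        have hij : i ≠ j := fun h => hyGi (h ▸ hj)
        obtain ⟨b', -, hun⟩ := hpair x y ⟨i, j, hij, hx, hj⟩
        have e1 := hun b ⟨hbB, hxb, hyb'⟩
        have e2 := hun c ⟨hcB, hxc, hyc'⟩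
        exact hbc (e1.trans e2.symm)
      have hcard := Finset.card_biUnion hdisjT
      rw [hbiU] at hcard
      have hV0G : (V0 \ G i).card = 6 * n - 6 := by
        rw [Finset.card_sdiff_of_subset (hGV0 i), hV0card, hGcard i]
      have hsum : ∀ b ∈ T, (b.erase x).card = 2 := by
        intro b hb
        obtain ⟨hbB, hxb⟩ := hTmem b |>.1 hb
        rw [Finset.card_erase_of_mem hxb, (hB b hbB).2.1]
      rw [Finset.sum_congr rfl hsum, Finset.sum_const, smul_eq_mul] at hcard
      omega
    -- the unique class containing a block
    have classOf : ∀ b ∈ B, ∃ P, (P ∈ R ∧ b ∈ P) ∧ ∀ Q, Q ∈ R → b ∈ Q → Q = P := by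
      intro b hb
      obtain ⟨P, hP, hPu⟩ := hR2 b hb
      exact ⟨P, hP, fun Q hQ hbQ => hPu Q ⟨hQ, hbQ⟩⟩
    -- number of classes not missing a given group
    have hclassesNot : ∀ i, (R.filter (fun P => missOf P ≠ i)).card = 3 * n - 3 := by
      intro i
      obtain ⟨x, hx⟩ := hGne i
      rw [← hblocks i x hx]
      have hxmem : ∀ P ∈ R.filter (fun P => missOf P ≠ i), x ∈ V0 \ G (missOf P) := by
        intro P hP
        obtain ⟨hPR, hPne⟩ := Finset.mem_filter.1 hP
        refine Finset.mem_sdiff.2 ⟨hGV0 i hx, fun hxm => ?_⟩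
        exact hPne (huniqGroup x _ _ hxm hx)
      have hex : ∀ P ∈ R.filter (fun P => missOf P ≠ i), ∃ b, b ∈ P ∧ x ∈ b := by
        intro P hP
        obtain ⟨b, hb, -⟩ := (hmissSpec P (Finset.mem_filter.1 hP).1).2 x (hxmem P hP)
        exact ⟨b, hb⟩
      apply Finset.card_bij (fun P hP => (hex P hP).choose)
      · intro P hP
        obtain ⟨hbP, hxb⟩ := (hex P hP).choose_spec
        have hPR := (Finset.mem_filter.1 hP).1
        exact Finset.mem_filter.2 ⟨(hR1 P hPR).1 hbP, hxb⟩
      · intro P1 hP1 P2 hP2 heq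
        obtain ⟨hb1, hx1⟩ := (hex P1 hP1).choose_spec
        obtain ⟨hb2, hx2⟩ := (hex P2 hP2).choose_spec
        rw [heq] at hb1
        have hbB : (hex P2 hP2).choose ∈ B := (hR1 P2 (Finset.mem_filter.1 hP2).1).1 hb2
        obtain ⟨P, -, hPu⟩ := hR2 _ hbB
        have e1 := hPu P1 ⟨(Finset.mem_filter.1 hP1).1, hb1⟩
        have e2 := hPu P2 ⟨(Finset.mem_filter.1 hP2).1, hb2⟩
        exact e1.trans e2.symm
      · intro b hb
        obtain ⟨hbB, hxb⟩ := Finset.mem_filter.1 hb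
        obtain ⟨P, ⟨hPR, hbP⟩, hPu⟩ := classOf b hbB
        have hPfil : P ∈ R.filter (fun P => missOf P ≠ i) := by
          refine Finset.mem_filter.2 ⟨hPR, fun hPi => ?_⟩
          have hsub := (hmissSpec P hPR).1 b hbP
          have := Finset.mem_sdiff.1 (hsub hxb)
          rw [hPi] at this
          exact this.2 hx
        refine ⟨P, hPfil, ?_⟩
        obtain ⟨hb', hx'⟩ := (hex P hPfil).choose_spec
        obtain ⟨b'', ⟨-, -⟩, hbu⟩ := (hmissSpec P hPR).2 x (hxmem P hPfil)
        have e1 := hbu _ ⟨hb', hx'⟩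
        have e2 := hbu b ⟨hbP, hxb⟩
        exact e1.trans e2.symm
    -- total number of classes
    have hRcard : R.card = 3 * n := by
      have hfib : R.card = ∑ i : Fin n, (R.filter (fun P => missOf P = i)).card :=
        Finset.card_eq_sum_card_fiberwise (fun P _ => Finset.mem_univ (missOf P))
      have hsplit : ∀ i : Fin n, (R.filter (fun P => missOf P = i)).card +
          (R.filter (fun P => missOf P ≠ i)).card = R.card :=
        fun i => Finset.card_filter_add_card_filter_not _
      have hkey : ∀ i : Fin n, (R.filter (fun P => missOf P = i)).card
          = R.card - (3 * n - 3) := by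
        intro i
        have := hsplit i
        rw [hclassesNot i] at this
        omega
      rw [Finset.sum_congr rfl (fun i _ => hkey i), Finset.sum_const, Finset.card_univ,
        Fintype.card_fin, smul_eq_mul] at hfib
      -- n * (R.card - (3n-3)) = R.card  with  R.card ≥ 3n-3
      have hge : 3 * n - 3 ≤ R.card := by
        have := hsplit ⟨0, hn⟩
        rw [hclassesNot ⟨0, hn⟩] at this
        omega
      obtain ⟨k, rfl⟩ : ∃ k, n = k + 2 := ⟨n - 2, by omega⟩
      obtain ⟨N, hN⟩ : ∃ N, R.card = N + (3 * (k + 2) - 3) := ⟨R.card - (3 * (k+2) - 3), by omega⟩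
      rw [hN] at hfib ⊢
      have h3 : 3 * (k + 2) - 3 = 3 * k + 3 := by omega
      rw [h3] at hfib ⊢
      have hx : N + (3 * k + 3) - (3 * k + 3) = N := by omega
      rw [hx] at hfib
      have hNk : (k + 2) * N = N + (3 * k + 3) := hfib.symm
      have hN1 : N = 3 := by
        have hz : ((k : ℤ) + 1) * N = ((k : ℤ) + 1) * 3 := by
          have hzz : ((k : ℤ) + 2) * N = N + (3 * k + 3) := by exact_mod_cast hNk
          linear_combination hzz
        have hk1 : ((k : ℤ) + 1) ≠ 0 := by positivity
        have := mul_left_cancel₀ hk1 hz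
        exact_mod_cast this
      omega
    have hcfib : ∀ i, (R.filter (fun P => missOf P = i)).card = 3 := by
      intro i
      have h1 := Finset.card_filter_add_card_filter_not
        (s := R) (p := fun P => missOf P = i)
      rw [hclassesNot i, hRcard] at h1
      omega
    -- enumerate the three classes missing each group
    have hex3 : ∀ i, ∃ t : Fin 3 → Finset (Finset ℕ), Function.Injective t ∧
        ∀ P, P ∈ R.filter (fun P => missOf P = i) ↔ ∃ j, P = t j := by
      intro i
      obtain ⟨P1, P2, P3, h12, h13, h23, hset⟩ := Finset.card_eq_three.1 (hcfib i)
      refine ⟨![P1, P2, P3], ?_, ?_⟩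
      · intro a b hab
        fin_cases a <;> fin_cases b <;>
          simp only [Matrix.cons_val_zero, Matrix.cons_val_one, Matrix.head_cons,
            Matrix.cons_val_two, Matrix.tail_cons] at hab <;>
          first
            | rfl
            | exact absurd hab h12
            | exact absurd hab h13
            | exact absurd hab h23
            | exact absurd hab.symm h12
            | exact absurd hab.symm h13
            | exact absurd hab.symm h23
      · intro P
        rw [hset]
        simp only [Finset.mem_insert, Finset.mem_singleton]
        constructor
        · rintro (rfl | rfl | rfl)
          exacts [⟨0, rfl⟩, ⟨1, rfl⟩, ⟨2, rfl⟩]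
        · rintro ⟨j, rfl⟩
          fin_cases j
          · exact Or.inl rfl
          · exact Or.inr (Or.inl rfl)
          · exact Or.inr (Or.inr rfl)
    choose t ht1 ht2 using hex3
    have htmem : ∀ i j, t i j ∈ R ∧ missOf (t i j) = i := by
      intro i j
      have : t i j ∈ R.filter (fun P => missOf P = i) := (ht2 i (t i j)).2 ⟨j, rfl⟩
      exact Finset.mem_filter.1 this
    refine ⟨t, ?_, ?_, ?_⟩
    · intro i j
      obtain ⟨hPR, hPmiss⟩ := htmem i j
      refine ⟨(hR1 _ hPR).1, ?_⟩
      have := hmissSpec _ hPR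
      rwa [hPmiss] at this
    · intro b hb
      obtain ⟨P, ⟨hPR, hbP⟩, -⟩ := classOf b hb
      have hPfib : P ∈ R.filter (fun Q => missOf Q = missOf P) :=
        Finset.mem_filter.2 ⟨hPR, rfl⟩
      obtain ⟨j, hPj⟩ := (ht2 (missOf P) P).1 hPfib
      exact ⟨missOf P, j, hPj ▸ hbP⟩
    · intro b i j i' j' hb hb'
      obtain ⟨hR1', hm1⟩ := htmem i j
      obtain ⟨hR2', hm2⟩ := htmem i' j'
      have hbB : b ∈ B := (hR1 _ hR1').1 hb
      obtain ⟨P, -, hPu⟩ := hR2 b hbB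
      have e1 := hPu _ ⟨hR1', hb⟩
      have e2 := hPu _ ⟨hR2', hb'⟩
      have hval : t i j = t i' j' := e1.trans e2.symm
      have hii : i = i' := by rw [← hm1, ← hm2, hval]
      subst hii
      exact ⟨rfl, ht1 i (by rw [hval])⟩

/-! ### the filling map from AG(2,3) onto a group plus three new points -/

lemma pick_mem_of_card_three {s : Finset ℕ} (h : s.card = 3) (k : ℕ) (hk : k < 3) :
    pick s k ∈ s := by
  obtain ⟨hs, -⟩ := three_pick s h
  have hmem : ∀ x ∈ ({pick s 0, pick s 1, pick s 2} : Finset ℕ), x ∈ s := by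
    rw [← hs]; exact fun x hx => hx
  apply hmem
  interval_cases k <;> simp

lemma pick_inj_of_card_three {s : Finset ℕ} (h : s.card = 3) (a b : ZMod 3)
    (hab : pick s a.val = pick s b.val) : a = b := by
  obtain ⟨-, h01, h02, h12⟩ := three_pick s h
  rcases ztri a with ha | ha | ha <;> rcases ztri b with hb | hb | hb <;> subst ha <;> subst hb <;>
    first
      | rfl
      | (exfalso; revert hab; norm_num [ZMod.val]; tauto)

lemma val_inj3 : ∀ a b : ZMod 3, a.val = b.val → a = b := by decide

def fmap (m : ℕ) (Wi Di : Finset ℕ) : P3 → ℕ := fun p =>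
  if p.1 = 0 then m + p.2.val else if p.1 = 1 then pick Wi p.2.val else pick Di p.2.val

section fmapfacts

variable {m : ℕ} {Wi Gi : Finset ℕ} (hW : Wi ⊆ Gi) (hW3 : Wi.card = 3) (hG6 : Gi.card = 6)
  (hlt : ∀ x ∈ Gi, x < m)

include hW hW3 hG6 in
lemma hD3 : (Gi \ Wi).card = 3 := by
  rw [Finset.card_sdiff_of_subset hW, hG6, hW3]

include hW hW3 hG6 in
lemma fmap_val_mem :
    ∀ p : P3, (p.1 = 0 → fmap m Wi (Gi \ Wi) p ∈ ({m, m + 1, m + 2} : Finset ℕ)) ∧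
      (p.1 = 1 → fmap m Wi (Gi \ Wi) p ∈ Wi) ∧
      (p.1 = 2 → fmap m Wi (Gi \ Wi) p ∈ Gi \ Wi) := by
  intro p
  refine ⟨fun h0 => ?_, fun h1 => ?_, fun h2 => ?_⟩
  · rw [fmap, if_pos h0]
    rcases ztri p.2 with h | h | h <;> rw [h] <;> simp [ZMod.val] <;> decide
  · rw [fmap, if_neg (by rw [h1]; decide), if_pos h1]
    exact pick_mem_of_card_three hW3 _ (ZMod.val_lt p.2)
  · rw [fmap, if_neg (by rw [h2]; decide), if_neg (by rw [h2]; decide)]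
    exact pick_mem_of_card_three (hD3 hW hW3 hG6) _ (ZMod.val_lt p.2)

include hW hW3 hG6 hlt in
lemma fmap_inj : Function.Injective (fmap m Wi (Gi \ Wi)) := by
  intro p q hpq
  have hmem := fmap_val_mem (m := m) hW hW3 hG6
  have hS : ∀ x ∈ ({m, m + 1, m + 2} : Finset ℕ), ¬ x < m := by
    intro x hx
    simp only [Finset.mem_insert, Finset.mem_singleton] at hx
    rcases hx with rfl | rfl | rfl <;> omega
  have hGW : ∀ x ∈ Wi, x ∈ Gi := fun x hx => hW hx
  have hGD : ∀ x ∈ Gi \ Wi, x ∈ Gi := fun x hx => (Finset.mem_sdiff.1 hx).1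
  have hWD : ∀ x ∈ Wi, x ∉ Gi \ Wi := fun x hx h => (Finset.mem_sdiff.1 h).2 hx
  have hfst : p.1 = q.1 := by
    rcases ztri p.1 with h | h | h <;> rcases ztri q.1 with h' | h' | h' <;>
        rw [h, h'] <;> first
      | rfl
      | (exfalso
         first
           | exact hS _ ((hmem p).1 h) (hpq ▸ hlt _ (hGW _ ((hmem q).2.1 h')))
           | exact hS _ ((hmem p).1 h) (hpq ▸ hlt _ (hGD _ ((hmem q).2.2 h')))
           | exact hS _ ((hmem q).1 h') (hpq ▸ hlt _ (hGW _ ((hmem p).2.1 h)))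
           | exact hS _ ((hmem q).1 h') (hpq ▸ hlt _ (hGD _ ((hmem p).2.2 h)))
           | exact hWD _ ((hmem p).2.1 h) (hpq ▸ (hmem q).2.2 h')
           | exact hWD _ ((hmem q).2.1 h') (hpq ▸ (hmem p).2.2 h))
  have hsnd : p.2 = q.2 := by
    rcases ztri p.1 with h | h | h <;>
      (simp only [fmap] at hpq; rw [h] at hfst hpq; rw [← hfst] at hpq)
    · rw [if_pos rfl, if_pos rfl] at hpq
      have hv : p.2.val = q.2.val := by omega
      exact val_inj3 _ _ hv
    · rw [if_neg (by decide), if_pos rfl, if_neg (by decide), if_pos rfl] at hpq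
      exact pick_inj_of_card_three hW3 _ _ hpq
    · rw [if_neg (by decide), if_neg (by decide), if_neg (by decide), if_neg (by decide)] at hpq
      exact pick_inj_of_card_three (hD3 hW hW3 hG6) _ _ hpq
  exact Prod.ext hfst hsnd

lemma zrow0 : ((0:ZMod 3),(0:ZMod 3)) + e0 = ((0:ZMod 3),(1:ZMod 3))
    ∧ ((0:ZMod 3),(0:ZMod 3)) - e0 = ((0:ZMod 3),(2:ZMod 3))
    ∧ ((1:ZMod 3),(0:ZMod 3)) + e0 = ((1:ZMod 3),(1:ZMod 3))
    ∧ ((1:ZMod 3),(0:ZMod 3)) - e0 = ((1:ZMod 3),(2:ZMod 3))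
    ∧ ((2:ZMod 3),(0:ZMod 3)) + e0 = ((2:ZMod 3),(1:ZMod 3))
    ∧ ((2:ZMod 3),(0:ZMod 3)) - e0 = ((2:ZMod 3),(2:ZMod 3)) := by decide

include hW hW3 hG6 in
lemma fmap_rows :
    Finset.image (fmap m Wi (Gi \ Wi)) (lineOf ((0:ZMod 3),(0:ZMod 3)) e0)
        = {m, m + 1, m + 2} ∧
      Finset.image (fmap m Wi (Gi \ Wi)) (lineOf ((1:ZMod 3),(0:ZMod 3)) e0) = Wi ∧
      Finset.image (fmap m Wi (Gi \ Wi)) (lineOf ((2:ZMod 3),(0:ZMod 3)) e0) = Gi \ Wi := by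
  obtain ⟨z1, z2, z3, z4, z5, z6⟩ := zrow0
  have hv0 : ((0:ZMod 3)).val = 0 := rfl
  have hv1 : ((1:ZMod 3)).val = 1 := rfl
  have hv2 : ((2:ZMod 3)).val = 2 := rfl
  refine ⟨?_, ?_, ?_⟩
  · rw [lineOf, z1, z2]
    rw [Finset.image_insert, Finset.image_insert, Finset.image_singleton]
    rw [show fmap m Wi (Gi \ Wi) ((0:ZMod 3),(0:ZMod 3)) = m by simp [fmap, hv0],
      show fmap m Wi (Gi \ Wi) ((0:ZMod 3),(1:ZMod 3)) = m + 1 by simp [fmap, hv1],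
      show fmap m Wi (Gi \ Wi) ((0:ZMod 3),(2:ZMod 3)) = m + 2 by simp [fmap, hv2]]
  · rw [lineOf, z3, z4]
    rw [Finset.image_insert, Finset.image_insert, Finset.image_singleton]
    rw [show fmap m Wi (Gi \ Wi) ((1:ZMod 3),(0:ZMod 3)) = pick Wi 0 by
        rw [fmap]; rw [if_neg (by decide), if_pos rfl, hv0],
      show fmap m Wi (Gi \ Wi) ((1:ZMod 3),(1:ZMod 3)) = pick Wi 1 by
        rw [fmap]; rw [if_neg (by decide), if_pos rfl, hv1],
      show fmap m Wi (Gi \ Wi) ((1:ZMod 3),(2:ZMod 3)) = pick Wi 2 by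
        rw [fmap]; rw [if_neg (by decide), if_pos rfl, hv2]]
    exact (three_pick Wi hW3).1.symm
  · rw [lineOf, z5, z6]
    rw [Finset.image_insert, Finset.image_insert, Finset.image_singleton]
    rw [show fmap m Wi (Gi \ Wi) ((2:ZMod 3),(0:ZMod 3)) = pick (Gi \ Wi) 0 by
        rw [fmap]; rw [if_neg (by decide), if_neg (by decide), hv0],
      show fmap m Wi (Gi \ Wi) ((2:ZMod 3),(1:ZMod 3)) = pick (Gi \ Wi) 1 by
        rw [fmap]; rw [if_neg (by decide), if_neg (by decide), hv1],
      show fmap m Wi (Gi \ Wi) ((2:ZMod 3),(2:ZMod 3)) = pick (Gi \ Wi) 2 by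
        rw [fmap]; rw [if_neg (by decide), if_neg (by decide), hv2]]
    exact (three_pick _ (hD3 hW hW3 hG6)).1.symm

lemma univ_eq_rows : (Finset.univ : Finset P3) =
    lineOf ((0:ZMod 3),(0:ZMod 3)) e0 ∪ lineOf ((1:ZMod 3),(0:ZMod 3)) e0
      ∪ lineOf ((2:ZMod 3),(0:ZMod 3)) e0 := by
  ext p
  simp only [Finset.mem_univ, true_iff, Finset.mem_union, mem_row]
  rcases ztri p.1 with h | h | h
  · exact Or.inl (Or.inl h)
  · exact Or.inl (Or.inr h)
  · exact Or.inr h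

include hW hW3 hG6 in
lemma fmap_univ :
    Finset.image (fmap m Wi (Gi \ Wi)) Finset.univ = Gi ∪ {m, m + 1, m + 2} := by
  obtain ⟨h1, h2, h3⟩ := fmap_rows (m := m) hW hW3 hG6
  rw [univ_eq_rows, Finset.image_union, Finset.image_union, h1, h2, h3]
  ext x
  simp only [Finset.mem_union, Finset.mem_sdiff]
  constructor
  · rintro ((hx | hx) | hx)
    · exact Or.inr hx
    · exact Or.inl (hW hx)
    · exact Or.inl hx.1
  · rintro (hx | hx)
    · by_cases hxW : x ∈ Wi
      · exact Or.inl (Or.inr hxW)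
      · exact Or.inr ⟨hx, hxW⟩
    · exact Or.inl (Or.inl hx)

end fmapfacts

/-! ### the main construction -/

def Dp : Fin 3 → P3 := ![(1,0),(1,1),(1,2)]

lemma hDpmem : ∀ j, Dp j ∈ D ∧ Dp j ≠ e0 := by decide
lemma hDpinj : Function.Injective Dp := by decide
lemma hDpsurj : ∀ d ∈ D, d ≠ e0 → ∃ j, Dp j = d := by decide
lemma zfst0 : ∀ d ∈ D, d.1 = 0 → d = e0 := by decide
lemma zfst1 : ∀ d ∈ D, d ≠ e0 → d.1 = 1 := by decide

lemma line_fst {p d : P3} (hd : d.1 = 1) (c : ZMod 3) : ∃ q ∈ lineOf p d, q.1 = c := by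
  rcases z4 p.1 c with h | h | h
  · exact ⟨p, self_mem_lineOf p d, h.symm⟩
  · exact ⟨p + d, mem_lineOf.2 (Or.inr (Or.inl rfl)), by rw [Prod.fst_add, hd, ← h]⟩
  · exact ⟨p - d, mem_lineOf.2 (Or.inr (Or.inr rfl)), by rw [Prod.fst_sub, hd, ← h]⟩

lemma row_normalize (p : P3) : lineOf p e0 = lineOf (p.1, (0:ZMod 3)) e0 := by
  ext x
  rw [mem_row, mem_row]

lemma main (n : ℕ) (hn : 0 < n) (G W : Fin n → Finset ℕ) (B A : Finset (Finset ℕ))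
    (hG6 : ∀ i, (G i).card = 6)
    (hGdisj : ∀ i j, i ≠ j → Disjoint (G i) (G j))
    (hBprop : ∀ b ∈ B, b ⊆ Finset.univ.biUnion G ∧ b.card = 3 ∧ ∀ i, (b ∩ G i).card ≤ 1)
    (hBpair : ∀ x y : ℕ, (∃ i j, i ≠ j ∧ x ∈ G i ∧ y ∈ G j) → ∃! b, b ∈ B ∧ x ∈ b ∧ y ∈ b)
    (hW3 : ∀ i, (W i).card = 3)
    (hWdisj : ∀ i j, i ≠ j → Disjoint (W i) (W j))
    (hAprop : ∀ b ∈ A, b ⊆ Finset.univ.biUnion W ∧ b.card = 3 ∧ ∀ i, (b ∩ W i).card ≤ 1)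
    (hApair : ∀ x y : ℕ, (∃ i j, i ≠ j ∧ x ∈ W i ∧ y ∈ W j) → ∃! b, b ∈ A ∧ x ∈ b ∧ y ∈ b)
    (hWG : ∀ i, W i ⊆ G i) (hAB : A ⊆ B)
    (R : Finset (Finset (Finset ℕ)))
    (hR1 : ∀ P ∈ R, P ⊆ B ∧ ∃ i, IsParallelClassOn (Finset.univ.biUnion G \ G i) P)
    (hR2 : ∀ b ∈ B, ∃! P, P ∈ R ∧ b ∈ P) :
    ExistsKTSSubSTS (6 * n + 3) (3 * n) := by
  classical
  obtain ⟨r, hr1, hr2, hr3⟩ := frame_enum n hn G B hG6 hGdisj hBprop hBpair R hR1 hR2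
  set V0 : Finset ℕ := Finset.univ.biUnion G with hV0
  set m : ℕ := V0.sup id + 1 with hm
  set S : Finset ℕ := {m, m + 1, m + 2} with hSdef
  have hGV0 : ∀ i, G i ⊆ V0 := fun i => Finset.subset_biUnion_of_mem G (Finset.mem_univ i)
  have hgrp : ∀ x ∈ V0, ∃ i, x ∈ G i := by
    intro x hx
    obtain ⟨i, -, hi⟩ := Finset.mem_biUnion.1 hx
    exact ⟨i, hi⟩
  have huniqgrp : ∀ x, ∀ i j, x ∈ G i → x ∈ G j → i = j := by
    intro x i j hi hj
    by_contra hij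
    exact Finset.disjoint_left.1 (hGdisj i j hij) hi hj
  have huniqW : ∀ x, ∀ i j, x ∈ W i → x ∈ W j → i = j := by
    intro x i j hi hj
    by_contra hij
    exact Finset.disjoint_left.1 (hWdisj i j hij) hi hj
  have hSV0 : ∀ x ∈ S, x ∉ V0 := by
    intro x hx hxV
    have hle : x ≤ V0.sup id := Finset.le_sup (f := id) hxV
    rw [hSdef] at hx
    simp only [Finset.mem_insert, Finset.mem_singleton] at hx
    omega
  have hlt : ∀ i, ∀ x ∈ G i, x < m := by
    intro i x hx
    have hle : x ≤ V0.sup id := Finset.le_sup (f := id) (hGV0 i hx)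
    omega
  have hmS : m ∈ S ∧ m + 1 ∈ S ∧ m + 2 ∈ S := by
    rw [hSdef]; refine ⟨by simp, by simp, by simp⟩
  set f : Fin n → P3 → ℕ := fun i => fmap m (W i) (G i \ W i) with hf
  have hfinj : ∀ i, Function.Injective (f i) := fun i =>
    fmap_inj (hWG i) (hW3 i) (hG6 i) (hlt i)
  have hrows : ∀ i,
      Finset.image (f i) (lineOf ((0:ZMod 3),(0:ZMod 3)) e0) = S ∧
      Finset.image (f i) (lineOf ((1:ZMod 3),(0:ZMod 3)) e0) = W i ∧
      Finset.image (f i) (lineOf ((2:ZMod 3),(0:ZMod 3)) e0) = G i \ W i := fun i =>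
    fmap_rows (hWG i) (hW3 i) (hG6 i)
  set X : Fin n → Finset ℕ := fun i => G i ∪ S with hX
  have hXuniv : ∀ i, Finset.image (f i) Finset.univ = X i := fun i =>
    fmap_univ (hWG i) (hW3 i) (hG6 i)
  have hfmem : ∀ i p, f i p ∈ X i := by
    intro i p
    rw [← hXuniv i]
    exact Finset.mem_image_of_mem _ (Finset.mem_univ p)
  have hfS : ∀ i p, f i p ∈ S ↔ p.1 = 0 := by
    intro i p
    have hvm := fmap_val_mem (m := m) (hWG i) (hW3 i) (hG6 i) p
    constructor
    · intro hpS
      by_contra h0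
      rcases ztri p.1 with h | h | h
      · exact h0 h
      · exact hSV0 _ hpS (hGV0 i (hWG i (hvm.2.1 h)))
      · exact hSV0 _ hpS (hGV0 i (Finset.mem_sdiff.1 (hvm.2.2 h)).1)
    · intro h0
      exact hvm.1 h0
  have hfG : ∀ i p, f i p ∈ G i ↔ p.1 ≠ 0 := by
    intro i p
    have hvm := fmap_val_mem (m := m) (hWG i) (hW3 i) (hG6 i) p
    constructor
    · intro hpG h0
      exact hSV0 _ (hvm.1 h0) (hGV0 i hpG)
    · intro h0
      rcases ztri p.1 with h | h | h
      · exact absurd h h0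
      · exact hWG i (hvm.2.1 h)
      · exact (Finset.mem_sdiff.1 (hvm.2.2 h)).1
  have himg_mem : ∀ i (l : Finset P3) (a : P3), f i a ∈ l.image (f i) ↔ a ∈ l := by
    intro i l a
    constructor
    · intro h
      obtain ⟨b, hb, hba⟩ := Finset.mem_image.1 h
      rwa [← hfinj i hba]
    · exact fun h => Finset.mem_image_of_mem _ h
  have himg_inj : ∀ i (l1 l2 : Finset P3),
      l1.image (f i) = l2.image (f i) → l1 = l2 := by
    intro i l1 l2 h
    ext a
    rw [← himg_mem i l1 a, ← himg_mem i l2 a, h]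
  set Fill : Fin n → Finset (Finset ℕ) := fun i => L.image (Finset.image (f i)) with hFill
  set BigB : Finset (Finset ℕ) := B ∪ Finset.univ.biUnion Fill with hBigB
  set BigV : Finset ℕ := V0 ∪ S with hBigV
  have hmemFill : ∀ i b, b ∈ Fill i ↔ ∃ l ∈ L, b = l.image (f i) := by
    intro i b
    rw [hFill]
    simp only [Finset.mem_image]
    constructor
    · rintro ⟨l, hl, rfl⟩; exact ⟨l, hl, rfl⟩
    · rintro ⟨l, hl, rfl⟩; exact ⟨l, hl, rfl⟩
  have hfill_sub : ∀ i, ∀ b ∈ Fill i, b ⊆ X i ∧ b.card = 3 := by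
    intro i b hb
    obtain ⟨l, hl, rfl⟩ := (hmemFill i b).1 hb
    constructor
    · intro x hx
      obtain ⟨a, -, rfl⟩ := Finset.mem_image.1 hx
      exact hfmem i a
    · obtain ⟨d, hd, p, rfl⟩ := mem_L.1 hl
      rw [Finset.card_image_of_injective _ (hfinj i), card_lineOf hd]
  have hSrow : ∀ i p, (lineOf p e0).image (f i) = S ∨ (lineOf p e0).image (f i) = W i ∨
      (lineOf p e0).image (f i) = G i \ W i := by
    intro i p
    rw [row_normalize p]
    rcases ztri p.1 with h | h | h <;> rw [h]
    · exact Or.inl (hrows i).1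
    · exact Or.inr (Or.inl (hrows i).2.1)
    · exact Or.inr (Or.inr (hrows i).2.2)
  have hScard : S.card = 3 := by
    rw [hSdef]
    rw [Finset.card_insert_of_notMem (by simp),
      Finset.card_insert_of_notMem (by simp), Finset.card_singleton]
  -- a line not in the rows class has points in each group-row
  have hline_notrow : ∀ {d : P3}, d ∈ D → d ≠ e0 → ∀ (p : P3) (c : ZMod 3),
      ∃ q ∈ lineOf p d, q.1 = c := by
    intro d hd hde p c
    exact line_fst (zfst1 d hd hde) c
  -- a fill block equal to a set of S-points must be the special block S
  have hS_only : ∀ i b, b ∈ Fill i → ∀ x y, x ∈ b → y ∈ b → x ≠ y → x ∈ S → y ∈ S →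
      b = S := by
    intro i b hb x y hxb hyb hxy hxS hyS
    obtain ⟨l, hl, rfl⟩ := (hmemFill i b).1 hb
    obtain ⟨a, ha, rfl⟩ := Finset.mem_image.1 hxb
    obtain ⟨a', ha', rfl⟩ := Finset.mem_image.1 hyb
    have ha0 : a.1 = 0 := (hfS i a).1 hxS
    have ha'0 : a'.1 = 0 := (hfS i a').1 hyS
    have haa' : a ≠ a' := fun h => hxy (by rw [h])
    obtain ⟨d, hd, p, rfl⟩ := mem_L.1 hl
    have hdiff := diff_of_mem ha ha' haa'
    have hd0 : d.1 = 0 := by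
      rcases hdiff with h | h
      · rw [← h, Prod.fst_sub, ha0, ha'0, sub_zero]
      · have : d = -(a' - a) := by rw [h, neg_neg]
        rw [this, Prod.fst_neg, Prod.fst_sub, ha0, ha'0]
        decide
    have hde : d = e0 := zfst0 d hd hd0
    subst hde
    have hrow : lineOf p e0 = lineOf ((0:ZMod 3),(0:ZMod 3)) e0 := by
      rw [row_normalize]
      have : p.1 = 0 := by rw [← ha0]; exact (mem_row.1 ha).symm
      rw [this]
    rw [hrow]
    exact (hrows i).1
  -- fill blocks are never frame blocks
  have hfill_notB : ∀ i, ∀ b ∈ Fill i, b ∉ B := by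
    intro i b hb hbB
    obtain ⟨l, hl, rfl⟩ := (hmemFill i b).1 hb
    obtain ⟨hbV, hb3, hbG⟩ := hBprop _ hbB
    obtain ⟨d, hd, p, rfl⟩ := mem_L.1 hl
    by_cases hde : d = e0
    · subst hde
      rcases hSrow i p with h | h | h
      · rw [h] at hbV
        exact hSV0 m hmS.1 (hbV hmS.1)
      · have := hbG i
        have hsub : W i ⊆ (lineOf p e0).image (f i) ∩ G i := by
          rw [h]
          exact Finset.subset_inter (le_refl _) (hWG i)
        have := Finset.card_le_card hsub
        rw [hW3 i] at this
        omega
      · have := hbG i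
        have hsub : G i \ W i ⊆ (lineOf p e0).image (f i) ∩ G i := by
          rw [h]
          exact Finset.subset_inter (le_refl _) (Finset.sdiff_subset)
        have := Finset.card_le_card hsub
        rw [hD3 (hWG i) (hW3 i) (hG6 i)] at this
        omega
    · obtain ⟨q1, hq1, hq1c⟩ := hline_notrow hd hde p 1
      obtain ⟨q2, hq2, hq2c⟩ := hline_notrow hd hde p 2
      have hq12 : q1 ≠ q2 := fun h => by rw [h, hq2c] at hq1c; exact absurd hq1c (by decide)
      have hf12 : f i q1 ≠ f i q2 := fun h => hq12 (hfinj i h)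
      have hq1G : f i q1 ∈ G i := (hfG i q1).2 (by rw [hq1c]; decide)
      have hq2G : f i q2 ∈ G i := (hfG i q2).2 (by rw [hq2c]; decide)
      have hsub : ({f i q1, f i q2} : Finset ℕ) ⊆ (lineOf p d).image (f i) ∩ G i := by
        intro z hz
        rcases Finset.mem_insert.1 hz with rfl | hz
        · exact Finset.mem_inter.2 ⟨Finset.mem_image_of_mem _ hq1, hq1G⟩
        · rw [Finset.mem_singleton.1 hz]
          exact Finset.mem_inter.2 ⟨Finset.mem_image_of_mem _ hq2, hq2G⟩
      have hc2 : ({f i q1, f i q2} : Finset ℕ).card = 2 := by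
        rw [Finset.card_insert_of_notMem (by simpa using hf12), Finset.card_singleton]
      have := Finset.card_le_card hsub
      have := hbG i
      omega
  -- a fill block for group i contained in X i' with i ≠ i' must be S
  have hfill_inter : ∀ i i' b, i ≠ i' → b ∈ Fill i → b ⊆ X i' → b = S := by
    intro i i' b hii hb hsub
    have hbS : b ⊆ S := by
      intro x hx
      have hxXi : x ∈ X i := (hfill_sub i b hb).1 hx
      have hxXi' : x ∈ X i' := hsub hx
      rw [hX] at hxXi hxXi'
      rcases Finset.mem_union.1 hxXi with h1 | h1
      · rcases Finset.mem_union.1 hxXi' with h2 | h2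
        · exact absurd (huniqgrp x i i' h1 h2) hii
        · exact h2
      · exact h1
    have hbc : b.card = 3 := (hfill_sub i b hb).2
    exact Finset.eq_of_subset_of_card_le hbS (by omega)
  -- a fill block on a non-row line is never S
  have hfill_notS : ∀ i (l : Finset P3), l ∈ L → (∃ q ∈ l, q.1 ≠ 0) →
      l.image (f i) ≠ S := by
    rintro i l hl ⟨q, hq, hq0⟩ hSeq
    have : f i q ∈ S := by rw [← hSeq]; exact Finset.mem_image_of_mem _ hq
    exact hq0 ((hfS i q).1 this)
  -- basic membership facts for the big design
  have hBBigB : B ⊆ BigB := Finset.subset_union_left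
  have hfillBigB : ∀ i, Fill i ⊆ BigB := fun i => by
    intro b hb
    exact Finset.mem_union_right _ (Finset.mem_biUnion.2 ⟨i, Finset.mem_univ i, hb⟩)
  have hmemBigB : ∀ b, b ∈ BigB ↔ b ∈ B ∨ ∃ i, b ∈ Fill i := by
    intro b
    rw [hBigB, Finset.mem_union, Finset.mem_biUnion]
    constructor
    · rintro (h | ⟨i, -, h⟩)
      exacts [Or.inl h, Or.inr ⟨i, h⟩]
    · rintro (h | ⟨i, h⟩)
      exacts [Or.inl h, Or.inr ⟨i, Finset.mem_univ i, h⟩]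
  have hXBigV : ∀ i, X i ⊆ BigV := by
    intro i x hx
    rcases Finset.mem_union.1 hx with h | h
    · exact Finset.mem_union_left _ (hGV0 i h)
    · exact Finset.mem_union_right _ h
  have hblocksBig : ∀ b ∈ BigB, b ⊆ BigV ∧ b.card = 3 := by
    intro b hb
    rcases (hmemBigB b).1 hb with h | ⟨i, h⟩
    · obtain ⟨h1, h2, -⟩ := hBprop b h
      exact ⟨h1.trans Finset.subset_union_left, h2⟩
    · obtain ⟨h1, h2⟩ := hfill_sub i b h
      exact ⟨h1.trans (hXBigV i), h2⟩
  have hBigV_mem : ∀ x ∈ BigV, (∃ i, x ∈ G i) ∨ x ∈ S := by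
    intro x hx
    rcases Finset.mem_union.1 hx with h | h
    · exact Or.inl (hgrp x h)
    · exact Or.inr h
  have hXS : ∀ i k x, i ≠ k → x ∈ X i → x ∈ X k → x ∈ S := by
    intro i k x hik hxi hxk
    rcases Finset.mem_union.1 hxi with h1 | h1
    · rcases Finset.mem_union.1 hxk with h2 | h2
      · exact absurd (huniqgrp x i k h1 h2) hik
      · exact h2
    · exact h1
  have hGX : ∀ i x, x ∈ X i → x ∉ S → x ∈ G i := by
    intro i x hx hxS
    rcases Finset.mem_union.1 hx with h | h
    · exact h
    · exact absurd h hxS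
  have htwo : ∀ (x y : ℕ) (t : Finset ℕ), x ∈ t → y ∈ t → x ≠ y → 2 ≤ t.card := by
    intro x y t hx hy hxy
    have hsub : ({x, y} : Finset ℕ) ⊆ t := by
      intro z hz
      rcases Finset.mem_insert.1 hz with rfl | hz
      · exact hx
      · rw [Finset.mem_singleton.1 hz]; exact hy
    have : ({x, y} : Finset ℕ).card = 2 := by
      rw [Finset.card_insert_of_notMem (by simpa using hxy), Finset.card_singleton]
    have := Finset.card_le_card hsub
    omega
  have hnotSV : ∀ x ∈ V0, x ∉ S := fun x hx hxS => hSV0 x hxS hx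
  -- unique pair coverage when both points lie in a common X i
  have hpairX : ∀ i x y, x ∈ X i → y ∈ X i → x ≠ y →
      ∃! b, b ∈ BigB ∧ x ∈ b ∧ y ∈ b := by
    intro i x y hx hy hxy
    rw [← hXuniv i] at hx hy
    obtain ⟨a, -, rfl⟩ := Finset.mem_image.1 hx
    obtain ⟨a', -, ha'⟩ := Finset.mem_image.1 hy
    subst ha'
    have haa' : a ≠ a' := fun h => hxy (by rw [h])
    obtain ⟨d, hd, hal, ha'l⟩ := L_cover haa'
    have hlL : lineOf a d ∈ L := mem_L.2 ⟨d, hd, a, rfl⟩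
    set bl : Finset ℕ := (lineOf a d).image (f i) with hbl
    have hblF : bl ∈ Fill i := (hmemFill i bl).2 ⟨_, hlL, rfl⟩
    refine ⟨bl, ⟨hfillBigB i hblF, Finset.mem_image_of_mem _ hal,
      Finset.mem_image_of_mem _ ha'l⟩, ?_⟩
    rintro c ⟨hcB, hxc, hyc⟩
    rcases (hmemBigB c).1 hcB with hc | ⟨k, hc⟩
    · exfalso
      have hxV : f i a ∈ V0 := (hBprop c hc).1 hxc
      have hyV : f i a' ∈ V0 := (hBprop c hc).1 hyc
      have hxG : f i a ∈ G i := hGX i _ (hfmem i a) (hnotSV _ hxV)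
      have hyG : f i a' ∈ G i := hGX i _ (hfmem i a') (hnotSV _ hyV)
      have h2 := htwo _ _ (c ∩ G i) (Finset.mem_inter.2 ⟨hxc, hxG⟩)
        (Finset.mem_inter.2 ⟨hyc, hyG⟩) hxy
      have := (hBprop c hc).2.2 i
      omega
    · by_cases hki : k = i
      · subst hki
        obtain ⟨l', hl', rfl⟩ := (hmemFill k c).1 hc
        have hal' : a ∈ l' := (himg_mem k l' a).1 hxc
        have ha'l' : a' ∈ l' := (himg_mem k l' a').1 hyc
        rw [L_uniq haa' hl' hlL hal' ha'l' hal ha'l]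
      · have hxS : f i a ∈ S := hXS k i _ hki ((hfill_sub k c hc).1 hxc) (hfmem i a)
        have hyS : f i a' ∈ S := hXS k i _ hki ((hfill_sub k c hc).1 hyc) (hfmem i a')
        have hcS : c = S := hS_only k c hc _ _ hxc hyc hxy hxS hyS
        have hblS : bl = S := hS_only i bl hblF _ _ (Finset.mem_image_of_mem _ hal)
          (Finset.mem_image_of_mem _ ha'l) hxy hxS hyS
        rw [hcS, hblS]
  have hSTS : IsSTS BigV BigB := by
    refine ⟨hblocksBig, ?_⟩
    intro x hx y hy hxy
    rcases hBigV_mem x hx with ⟨i, hxi⟩ | hxS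
    · rcases hBigV_mem y hy with ⟨j, hyj⟩ | hyS
      · by_cases hij : i = j
        · subst hij
          exact hpairX i x y (Finset.mem_union_left _ hxi) (Finset.mem_union_left _ hyj) hxy
        · obtain ⟨b, ⟨hbB, hxb, hyb⟩, hbu⟩ := hBpair x y ⟨i, j, hij, hxi, hyj⟩
          refine ⟨b, ⟨hBBigB hbB, hxb, hyb⟩, ?_⟩
          rintro c ⟨hcB, hxc, hyc⟩
          rcases (hmemBigB c).1 hcB with hc | ⟨k, hc⟩
          · exact hbu c ⟨hc, hxc, hyc⟩
          · exfalso
            have hxk : x ∈ G k := hGX k x ((hfill_sub k c hc).1 hxc) (hnotSV x (hGV0 i hxi))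
            have hyk : y ∈ G k := hGX k y ((hfill_sub k c hc).1 hyc) (hnotSV y (hGV0 j hyj))
            exact hij ((huniqgrp x i k hxi hxk).trans (huniqgrp y j k hyj hyk).symm)
      · exact hpairX i x y (Finset.mem_union_left _ hxi) (Finset.mem_union_right _ hyS) hxy
    · rcases hBigV_mem y hy with ⟨j, hyj⟩ | hyS
      · exact hpairX j x y (Finset.mem_union_right _ hxS) (Finset.mem_union_left _ hyj) hxy
      · exact hpairX ⟨0, hn⟩ x y (Finset.mem_union_right _ hxS)
          (Finset.mem_union_right _ hyS) hxy
  -- the parallel classes of the big design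
  set FC : Fin n → Fin 3 → Finset (Finset ℕ) :=
    fun i j => (cls (Dp j)).image (Finset.image (f i)) with hFC
  set Q : Fin n → Fin 3 → Finset (Finset ℕ) := fun i j => FC i j ∪ r i j with hQ
  set Qinf : Finset (Finset ℕ) :=
    Finset.univ.biUnion (fun i => (cls e0).image (Finset.image (f i))) with hQinf
  set BigR : Finset (Finset (Finset ℕ)) :=
    ((Finset.univ : Finset (Fin n × Fin 3)).image fun q => Q q.1 q.2) ∪ {Qinf} with hBigR
  have hmemFC : ∀ i j b, b ∈ FC i j ↔ ∃ p, b = (lineOf p (Dp j)).image (f i) := by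
    intro i j b
    rw [hFC]
    simp only [Finset.mem_image]
    constructor
    · rintro ⟨l, hl, rfl⟩
      obtain ⟨p, rfl⟩ := mem_cls.1 hl
      exact ⟨p, rfl⟩
    · rintro ⟨p, rfl⟩
      exact ⟨lineOf p (Dp j), lineOf_mem_cls p (Dp j), rfl⟩
  have hFCFill : ∀ i j, FC i j ⊆ Fill i := by
    intro i j b hb
    obtain ⟨p, rfl⟩ := (hmemFC i j b).1 hb
    exact (hmemFill i _).2 ⟨_, mem_L.2 ⟨Dp j, (hDpmem j).1, p, rfl⟩, rfl⟩
  have hQinfmem : ∀ b, b ∈ Qinf ↔ ∃ i p, b = (lineOf p e0).image (f i) := by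
    intro b
    rw [hQinf]
    simp only [Finset.mem_biUnion, Finset.mem_image]
    constructor
    · rintro ⟨i, -, l, hl, rfl⟩
      obtain ⟨p, rfl⟩ := mem_cls.1 hl
      exact ⟨i, p, rfl⟩
    · rintro ⟨i, p, rfl⟩
      exact ⟨i, Finset.mem_univ i, lineOf p e0, lineOf_mem_cls p e0, rfl⟩
  have hQinfFill : ∀ b ∈ Qinf, ∃ i, b ∈ Fill i := by
    intro b hb
    obtain ⟨i, p, rfl⟩ := (hQinfmem b).1 hb
    exact ⟨i, (hmemFill i _).2 ⟨_, mem_L.2 ⟨e0, ze0D, p, rfl⟩, rfl⟩⟩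
  have hXcompl : ∀ i, X i ∪ (V0 \ G i) = BigV := by
    intro i
    ext z
    rw [hBigV, hX]
    simp only [Finset.mem_union, Finset.mem_sdiff]
    constructor
    · rintro ((h | h) | ⟨h, -⟩)
      · exact Or.inl (hGV0 i h)
      · exact Or.inr h
      · exact Or.inl h
    · rintro (h | h)
      · by_cases hGi : z ∈ G i
        · exact Or.inl (Or.inl hGi)
        · exact Or.inr ⟨h, hGi⟩
      · exact Or.inl (Or.inr h)
  have hXdisjcompl : ∀ i, ∀ a ∈ X i, a ∉ V0 \ G i := by
    intro i a ha hmem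
    obtain ⟨haV, haG⟩ := Finset.mem_sdiff.1 hmem
    rcases Finset.mem_union.1 ha with h | h
    · exact haG h
    · exact hSV0 a h haV
  have hFCpar : ∀ i j, IsParallelClassOn (X i) (FC i j) := by
    intro i j
    constructor
    · intro b hb
      exact (hfill_sub i b (hFCFill i j hb)).1
    · intro x hx
      rw [← hXuniv i] at hx
      obtain ⟨a, -, rfl⟩ := Finset.mem_image.1 hx
      refine ⟨(lineOf a (Dp j)).image (f i), ⟨(hmemFC i j _).2 ⟨a, rfl⟩,
        Finset.mem_image_of_mem _ (self_mem_lineOf a (Dp j))⟩, ?_⟩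
      rintro c ⟨hc, hxc⟩
      obtain ⟨p, rfl⟩ := (hmemFC i j c).1 hc
      have hal : a ∈ lineOf p (Dp j) := (himg_mem i _ a).1 hxc
      rw [lineOf_eq_of_mem hal]
  have hQsub : ∀ i j, Q i j ⊆ BigB := by
    intro i j b hb
    rcases Finset.mem_union.1 hb with h | h
    · exact hfillBigB i (hFCFill i j h)
    · exact hBBigB ((hr1 i j).1 h)
  have hQpar : ∀ i j, IsParallelClassOn BigV (Q i j) := by
    intro i j
    rw [← hXcompl i]
    exact parallel_union (hXdisjcompl i) (hFCpar i j) (hr1 i j).2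
  have hQinfsub : Qinf ⊆ BigB := by
    intro b hb
    obtain ⟨i, hbF⟩ := hQinfFill b hb
    exact hfillBigB i hbF
  have hQinfpar : IsParallelClassOn BigV Qinf := by
    constructor
    · intro b hb
      obtain ⟨i, hbF⟩ := hQinfFill b hb
      exact ((hfill_sub i b hbF).1).trans (hXBigV i)
    · intro x hx
      rcases hBigV_mem x hx with ⟨i, hxi⟩ | hxS
      · have hxX : x ∈ X i := Finset.mem_union_left _ hxi
        rw [← hXuniv i] at hxX
        obtain ⟨a, -, rfl⟩ := Finset.mem_image.1 hxX
        refine ⟨(lineOf a e0).image (f i), ⟨(hQinfmem _).2 ⟨i, a, rfl⟩,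
          Finset.mem_image_of_mem _ (self_mem_lineOf a e0)⟩, ?_⟩
        rintro c ⟨hc, hxc⟩
        obtain ⟨k, p, rfl⟩ := (hQinfmem c).1 hc
        by_cases hki : k = i
        · subst hki
          have hal : a ∈ lineOf p e0 := (himg_mem k _ a).1 hxc
          rw [lineOf_eq_of_mem hal]
        · exfalso
          have hcF : (lineOf p e0).image (f k) ∈ Fill k :=
            (hmemFill k _).2 ⟨_, mem_L.2 ⟨e0, ze0D, p, rfl⟩, rfl⟩
          have hxXk : f i a ∈ X k := (hfill_sub k _ hcF).1 hxc
          have hxSS : f i a ∈ S := hXS i k _ (fun h => hki h.symm) (hfmem i a) hxXk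
          exact hSV0 _ hxSS (hGV0 i hxi)
      · have hSQ : S ∈ Qinf := (hQinfmem S).2 ⟨⟨0, hn⟩, ((0:ZMod 3),(0:ZMod 3)),
          (hrows ⟨0, hn⟩).1.symm⟩
        refine ⟨S, ⟨hSQ, hxS⟩, ?_⟩
        rintro c ⟨hc, hxc⟩
        obtain ⟨k, p, rfl⟩ := (hQinfmem c).1 hc
        rcases hSrow k p with h | h | h
        · exact h
        · exfalso
          rw [h] at hxc
          exact hSV0 x hxS (hGV0 k (hWG k hxc))
        · exfalso
          rw [h] at hxc
          exact hSV0 x hxS (hGV0 k (Finset.mem_sdiff.1 hxc).1)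
  have hBigRmem : ∀ P, P ∈ BigR ↔ (∃ i j, P = Q i j) ∨ P = Qinf := by
    intro P
    rw [hBigR, Finset.mem_union, Finset.mem_image, Finset.mem_singleton]
    constructor
    · rintro (⟨⟨i, j⟩, -, rfl⟩ | h)
      exacts [Or.inl ⟨i, j, rfl⟩, Or.inr h]
    · rintro (⟨i, j, rfl⟩ | rfl)
      exacts [Or.inl ⟨⟨i, j⟩, Finset.mem_univ _, rfl⟩, Or.inr rfl]
  have hres1 : ∀ P ∈ BigR, P ⊆ BigB ∧ IsParallelClassOn BigV P := by
    intro P hP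
    rcases (hBigRmem P).1 hP with ⟨i, j, rfl⟩ | rfl
    · exact ⟨hQsub i j, hQpar i j⟩
    · exact ⟨hQinfsub, hQinfpar⟩
  have hFC_notB : ∀ i j b, b ∈ FC i j → b ∉ B := by
    intro i j b hb
    exact hfill_notB i b (hFCFill i j hb)
  -- a fill block lying in the fill of two different groups must be S, which is
  -- impossible for non-row lines
  have hcross : ∀ i i' (l : Finset P3), i ≠ i' → l ∈ L → (∃ q ∈ l, q.1 ≠ 0) →
      ∀ b' ∈ Fill i', l.image (f i) = b' → False := by
    intro i i' l hii hl hq b' hb' heq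
    have hbF : l.image (f i) ∈ Fill i := (hmemFill i _).2 ⟨l, hl, rfl⟩
    have hbS : l.image (f i) = S := by
      apply hfill_inter i i' _ hii hbF
      rw [heq]
      exact (hfill_sub i' b' hb').1
    exact hfill_notS i l hl hq hbS
  have hq1ne0 : ∀ j : Fin 3, ∀ p : P3, ∃ q ∈ lineOf p (Dp j), q.1 ≠ 0 := by
    intro j p
    obtain ⟨q, hq, hqc⟩ := hline_notrow (hDpmem j).1 (hDpmem j).2 p 1
    exact ⟨q, hq, by rw [hqc]; decide⟩
  have hres2 : ∀ b ∈ BigB, ∃! P, P ∈ BigR ∧ b ∈ P := by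
    intro b hb
    rcases (hmemBigB b).1 hb with hbB | ⟨i, hbF⟩
    · -- frame block
      obtain ⟨i, j, hbr⟩ := hr2 b hbB
      refine ⟨Q i j, ⟨(hBigRmem _).2 (Or.inl ⟨i, j, rfl⟩), Finset.mem_union_right _ hbr⟩, ?_⟩
      rintro P ⟨hP, hbP⟩
      rcases (hBigRmem P).1 hP with ⟨i', j', rfl⟩ | rfl
      · rcases Finset.mem_union.1 hbP with h | h
        · exact absurd hbB (hFC_notB i' j' b h)
        · obtain ⟨rfl, rfl⟩ := hr3 b i' j' i j h hbr
          rfl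
      · exfalso
        obtain ⟨k, hk⟩ := hQinfFill b hbP
        exact hfill_notB k b hk hbB
    · -- fill block
      obtain ⟨l, hl, rfl⟩ := (hmemFill i _).1 hbF
      obtain ⟨d, hd, p, rfl⟩ := mem_L.1 hl
      by_cases hde : d = e0
      · subst hde
        refine ⟨Qinf, ⟨(hBigRmem _).2 (Or.inr rfl), (hQinfmem _).2 ⟨i, p, rfl⟩⟩, ?_⟩
        rintro P ⟨hP, hbP⟩
        rcases (hBigRmem P).1 hP with ⟨i', j', rfl⟩ | rfl
        · exfalso
          rcases Finset.mem_union.1 hbP with h | h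
          · obtain ⟨p', heq⟩ := (hmemFC i' j' _).1 h
            by_cases hii : i' = i
            · subst hii
              have hleq : lineOf p e0 = lineOf p' (Dp j') := himg_inj i' _ _ heq
              have h1 : lineOf p e0 ∈ cls e0 := lineOf_mem_cls p e0
              have h2 : lineOf p e0 ∈ cls (Dp j') := hleq ▸ lineOf_mem_cls p' (Dp j')
              exact (hDpmem j').2 ((cls_uniq (hDpmem j').1 ze0D h2 h1).symm ▸ rfl)
            · have hbS : Finset.image (f i) (lineOf p e0) = S :=
                hfill_inter i' i _ (fun hc => hii hc) (hFCFill i' j' h)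
                  ((hfill_sub i _ hbF).1)
              apply hfill_notS i' (lineOf p' (Dp j'))
                (mem_L.2 ⟨Dp j', (hDpmem j').1, p', rfl⟩) (hq1ne0 j' p')
              rw [← heq]
              exact hbS
          · exact hfill_notB i _ hbF ((hr1 i' j').1 h)
        · rfl
      · obtain ⟨j, hj⟩ := hDpsurj d hd hde
        subst hj
        refine ⟨Q i j, ⟨(hBigRmem _).2 (Or.inl ⟨i, j, rfl⟩),
          Finset.mem_union_left _ ((hmemFC i j _).2 ⟨p, rfl⟩)⟩, ?_⟩
        rintro P ⟨hP, hbP⟩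
        rcases (hBigRmem P).1 hP with ⟨i', j', rfl⟩ | rfl
        · rcases Finset.mem_union.1 hbP with h | h
          · obtain ⟨p', heq⟩ := (hmemFC i' j' _).1 h
            by_cases hii : i' = i
            · subst hii
              have hleq : lineOf p (Dp j) = lineOf p' (Dp j') := himg_inj i' _ _ heq
              have h1 : lineOf p (Dp j) ∈ cls (Dp j) := lineOf_mem_cls p (Dp j)
              have h2 : lineOf p (Dp j) ∈ cls (Dp j') := hleq ▸ lineOf_mem_cls p' (Dp j')
              have : Dp j = Dp j' := cls_uniq (hDpmem j).1 (hDpmem j').1 h1 h2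
              rw [hDpinj this]
            · exfalso
              exact hcross i i' _ (fun hc => hii hc.symm) hl (hq1ne0 j p) _
                (hFCFill i' j' h) rfl
          · exact absurd ((hr1 i' j').1 h) (hfill_notB i _ hbF)
        · exfalso
          obtain ⟨i'', p'', heq⟩ := (hQinfmem _).1 hbP
          by_cases hii : i'' = i
          · subst hii
            have hleq : lineOf p (Dp j) = lineOf p'' e0 := himg_inj i'' _ _ heq
            have h1 : lineOf p (Dp j) ∈ cls (Dp j) := lineOf_mem_cls p (Dp j)
            have h2 : lineOf p (Dp j) ∈ cls e0 := hleq ▸ lineOf_mem_cls p'' e0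
            exact (hDpmem j).2 (cls_uniq (hDpmem j).1 ze0D h1 h2)
          · have hbF'' : (lineOf p'' e0).image (f i'') ∈ Fill i'' :=
              (hmemFill i'' _).2 ⟨_, mem_L.2 ⟨e0, ze0D, p'', rfl⟩, rfl⟩
            exact hcross i i'' _ (fun hc => hii hc.symm) hl (hq1ne0 j p) _ hbF'' heq
  -- cardinalities
  have hV0card : V0.card = 6 * n := by
    rw [hV0, Finset.card_biUnion (fun i _ j _ hij => hGdisj i j hij)]
    simp [hG6, mul_comm]
  have hdisjVS : Disjoint V0 S := Finset.disjoint_left.2 (fun {a} ha haS => hSV0 a haS ha)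
  have hBigVcard : BigV.card = 6 * n + 3 := by
    rw [hBigV, Finset.card_union_of_disjoint hdisjVS, hV0card, hScard]
  -- the sub-Steiner system
  set U : Finset ℕ := Finset.univ.biUnion W with hU
  set SubA : Finset (Finset ℕ) := A ∪ Finset.univ.image (fun i => W i) with hSubA
  have hUcard : U.card = 3 * n := by
    rw [hU, Finset.card_biUnion (fun i _ j _ hij => hWdisj i j hij)]
    simp [hW3, mul_comm]
  have hWU : ∀ i, W i ⊆ U := fun i => Finset.subset_biUnion_of_mem W (Finset.mem_univ i)
  have hUgrp : ∀ x ∈ U, ∃ i, x ∈ W i := by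
    intro x hx
    obtain ⟨i, -, hi⟩ := Finset.mem_biUnion.1 hx
    exact ⟨i, hi⟩
  have hUBigV : U ⊆ BigV := by
    intro x hx
    obtain ⟨i, hi⟩ := hUgrp x hx
    exact Finset.mem_union_left _ (hGV0 i (hWG i hi))
  have hmemSubA : ∀ b, b ∈ SubA ↔ b ∈ A ∨ ∃ i, b = W i := by
    intro b
    rw [hSubA, Finset.mem_union, Finset.mem_image]
    constructor
    · rintro (h | ⟨i, -, rfl⟩)
      exacts [Or.inl h, Or.inr ⟨i, rfl⟩]
    · rintro (h | ⟨i, rfl⟩)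
      exacts [Or.inl h, Or.inr ⟨i, Finset.mem_univ i, rfl⟩]
  have hWFill : ∀ i, W i ∈ Fill i := by
    intro i
    refine (hmemFill i (W i)).2 ⟨lineOf ((1:ZMod 3),(0:ZMod 3)) e0,
      mem_L.2 ⟨e0, ze0D, _, rfl⟩, ((hrows i).2.1).symm⟩
  have hSubABigB : SubA ⊆ BigB := by
    intro b hb
    rcases (hmemSubA b).1 hb with h | ⟨i, rfl⟩
    · exact hBBigB (hAB h)
    · exact hfillBigB i (hWFill i)
  have hSubSTS : IsSTS U SubA := by
    constructor
    · intro b hb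
      rcases (hmemSubA b).1 hb with h | ⟨i, rfl⟩
      · obtain ⟨h1, h2, -⟩ := hAprop b h
        exact ⟨h1, h2⟩
      · exact ⟨hWU i, hW3 i⟩
    · intro x hx y hy hxy
      obtain ⟨i, hxi⟩ := hUgrp x hx
      obtain ⟨j, hyj⟩ := hUgrp y hy
      by_cases hij : i = j
      · subst hij
        refine ⟨W i, ⟨(hmemSubA _).2 (Or.inr ⟨i, rfl⟩), hxi, hyj⟩, ?_⟩
        rintro c ⟨hc, hxc, hyc⟩
        rcases (hmemSubA c).1 hc with h | ⟨k, rfl⟩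
        · exfalso
          have h2 := htwo x y (c ∩ W i) (Finset.mem_inter.2 ⟨hxc, hxi⟩)
            (Finset.mem_inter.2 ⟨hyc, hyj⟩) hxy
          have := (hAprop c h).2.2 i
          omega
        · rw [huniqW x k i hxc hxi]
      · obtain ⟨b, ⟨hbA, hxb, hyb⟩, hbu⟩ := hApair x y ⟨i, j, hij, hxi, hyj⟩
        refine ⟨b, ⟨(hmemSubA _).2 (Or.inl hbA), hxb, hyb⟩, ?_⟩
        rintro c ⟨hc, hxc, hyc⟩
        rcases (hmemSubA c).1 hc with h | ⟨k, rfl⟩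
        · exact hbu c ⟨h, hxc, hyc⟩
        · exfalso
          exact hij ((huniqW x i k hxi hxc).trans (huniqW y j k hyj hyc).symm)
  exact ⟨BigV, U, BigB, SubA, ⟨hSTS, BigR, hres1, hres2⟩, hSubSTS, hUBigV, hSubABigB,
    hBigVcard, hUcard⟩

theorem stmt13' (n : ℕ) (hn : 0 < n) (h : ExistsFrameSubGDD 3 6 n) :
    ExistsKTSSubSTS (6 * n + 3) (3 * n) := by
  obtain ⟨G, W, B, A, ⟨⟨hG6, hGdisj, hBprop, hBpair⟩, R, hR1, hR2⟩,
    ⟨hW3, hWdisj, hAprop, hApair⟩, hWG, hAB⟩ := h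
  exact main n hn G W B A hG6 hGdisj hBprop hBpair hW3 hWdisj hAprop hApair hWG hAB R hR1 hR2

end KF13

/-- If there exists a Kirkman frame of type (3;6)^n, then there exists a KTS(6n+3)
containing an STS(3n) as a subdesign. -/
theorem stmt13 (n : ℕ) (hn : 0 < n) (h : ExistsFrameSubGDD 3 6 n) :
    ExistsKTSSubSTS (6 * n + 3) (3 * n) := KF13.stmt13' n hn h
end

section
/- Let v and w be positive integers with w odd. If there exist an MK(2v+1), a resolvable transversal design RTD(3,w), and an STS(w) whose chromatic index is at most (w-1)/2 + v, then there exists a KTS(2vw+w) containing an STS(vw) as a subdesign. -/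
/-!
Take the points `V × ℤ/w`. Each triple `b` of the MK(2v+1) is replaced by the `w²` triples
`{(x, a - r x * d) | x ∈ b}`, where `r x ∈ {0, 1, 2}` is the rank of `x` in `b`; as `1` and `2`
are units modulo the odd number `w`, they form an RTD(3,w) on `b × ℤ/w`. Each fibre `{x} × ℤ/w`
carries a copy of the STS(w). The same construction on the sub-STS(v) gives the sub-STS(vw).

For each parallel class `P` of the MK(2v+1) and each `d ≠ 0`, the triples over `P` with
difference `d` form a parallel class. The remaining triples, the fibre copies of the STS(w) and the
flat triples `b × {a}`, are sorted by color: a proper coloring of the STS(w) with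
`(w-1)/2 + v` colors leaves exactly `v` colors missing at each point `a`, since `a` lies on
`(w-1)/2` blocks. Matching these `v` colors with the `v` parallel classes of the MK(2v+1), the
class of color `i` consists of the fibre blocks of color `i` and of the flat triples `b × {a}`
with `b` in the parallel class matched with `i` at `a`.
-/

open Finset

theorem IsParallelClassOn.of_cover {X : Finset ℕ} {K : Finset (Finset ℕ)}
    (hsub : ∀ T ∈ K, T ⊆ X) (hcover : ∀ e ∈ X, ∃ T ∈ K, e ∈ T)
    (hdisj : ∀ T₁ ∈ K, ∀ T₂ ∈ K, ∀ e ∈ X, e ∈ T₁ → e ∈ T₂ → T₁ = T₂) :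
    IsParallelClassOn X K := by
  refine ⟨hsub, fun e he => ?_⟩
  obtain ⟨T, hT, heT⟩ := hcover e he
  exact ⟨T, ⟨hT, heT⟩, fun T' ⟨hT', heT'⟩ => hdisj T' hT' T hT e he heT' heT⟩

theorem IsSTS.two_mul_card_blocks_mem {V : Finset ℕ} {B : Finset (Finset ℕ)} (hS : IsSTS V B)
    {x : ℕ} (hx : x ∈ V) : 2 * #{b ∈ B | x ∈ b} = #V - 1 := by
  have hcover : V.erase x = {b ∈ B | x ∈ b}.biUnion (·.erase x) := by
    ext y
    simp only [mem_erase, mem_biUnion, mem_filter]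
    constructor
    · rintro ⟨hyx, hy⟩
      obtain ⟨b, ⟨hb, hxb, hyb⟩, -⟩ := hS.2 x hx y hy (Ne.symm hyx)
      exact ⟨b, ⟨hb, hxb⟩, hyx, hyb⟩
    · rintro ⟨b, ⟨hb, -⟩, hyx, hyb⟩
      exact ⟨hyx, (hS.1 b hb).1 hyb⟩
  have hdisj : Set.PairwiseDisjoint (↑{b ∈ B | x ∈ b} : Set (Finset ℕ)) (·.erase x) := by
    intro b₁ h₁ b₂ h₂ hne
    simp only [coe_filter, Set.mem_ofPred_eq] at h₁ h₂
    refine Finset.disjoint_left.2 fun y hy₁ hy₂ => hne ?_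
    rw [mem_erase] at hy₁ hy₂
    exact (hS.2 x hx y ((hS.1 b₁ h₁.1).1 hy₁.2) (Ne.symm hy₁.1)).unique
      ⟨h₁.1, h₁.2, hy₁.2⟩ ⟨h₂.1, h₂.2, hy₂.2⟩
  have hcard : ∀ b ∈ {b ∈ B | x ∈ b}, #(b.erase x) = 2 := by
    intro b hb
    rw [mem_filter] at hb
    rw [card_erase_of_mem hb.2, (hS.1 b hb.1).2]
  rw [← card_erase_of_mem hx, hcover, card_biUnion hdisj, sum_congr rfl hcard, sum_const,
    smul_eq_mul, mul_comm]

theorem IsResolution.card_eq_card_blocks_mem {V : Finset ℕ} {B : Finset (Finset ℕ)}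
    {R : Finset (Finset (Finset ℕ))} (hR : IsResolution V B R) {x : ℕ} (hx : x ∈ V) :
    #R = #{b ∈ B | x ∈ b} := by
  have hsplit : {b ∈ B | x ∈ b} = R.biUnion fun P => {b ∈ P | x ∈ b} := by
    ext b
    simp only [mem_filter, mem_biUnion]
    constructor
    · rintro ⟨hb, hxb⟩
      obtain ⟨P, ⟨hP, hbP⟩, -⟩ := hR.2 b hb
      exact ⟨P, hP, hbP, hxb⟩
    · rintro ⟨P, hP, hbP, hxb⟩
      exact ⟨(hR.1 P hP).1 hbP, hxb⟩
  have hdisj : Set.PairwiseDisjoint (↑R : Set (Finset (Finset ℕ))) fun P => {b ∈ P | x ∈ b} := by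
    intro P₁ h₁ P₂ h₂ hne
    refine Finset.disjoint_left.2 fun b hb₁ hb₂ => hne ?_
    rw [mem_filter] at hb₁ hb₂
    exact (hR.2 b ((hR.1 P₁ h₁).1 hb₁.1)).unique ⟨h₁, hb₁.1⟩ ⟨h₂, hb₂.1⟩
  have hone : ∀ P ∈ R, #{b ∈ P | x ∈ b} = 1 := by
    intro P hP
    obtain ⟨b, hb, huniq⟩ := (hR.1 P hP).2.2 x hx
    exact card_eq_one.2 ⟨b, eq_singleton_iff_unique_mem.2
      ⟨mem_filter.2 hb, fun c hc => huniq c (mem_filter.1 hc)⟩⟩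
  rw [hsplit, card_biUnion hdisj, sum_congr rfl hone, sum_const, smul_eq_mul, mul_one]

theorem IsResolution.card_eq_of_isSTS {V : Finset ℕ} {B : Finset (Finset ℕ)}
    {R : Finset (Finset (Finset ℕ))} (hS : IsSTS V B) (hR : IsResolution V B R) {v : ℕ}
    (hV : #V = 2 * v + 1) : #R = v := by
  obtain ⟨x, hx⟩ : V.Nonempty := card_pos.1 (by omega)
  have := hS.two_mul_card_blocks_mem hx
  rw [hR.card_eq_card_blocks_mem hx]
  omega

theorem Finset.exists_bijOn_of_card_eq {α β : Type*} [Nonempty β] {s : Finset α} {t : Finset β}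
    (h : #s = #t) : ∃ f : α → β, Set.BijOn f s t :=
  s.finite_toSet.exists_bijOn_of_encard_eq (by simp [h])

namespace KirkmanProduct

def IsProperColoring (C : Finset (Finset ℕ)) (k : ℕ) (col : Finset ℕ → ℕ) : Prop :=
  (∀ c ∈ C, col c < k) ∧ ∀ c₁ ∈ C, ∀ c₂ ∈ C, c₁ ≠ c₂ → col c₁ = col c₂ → Disjoint c₁ c₂

theorem exists_isProperColoring {C : Finset (Finset ℕ)} {k : ℕ} (h : ChromIndexLE C k) :
    ∃ col, IsProperColoring C k col := by
  obtain ⟨R, hRk, hR, hcov⟩ := h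
  choose! cls hcls using hcov
  refine ⟨fun c => R.toList.idxOf (cls c), fun c hc => ?_, fun c₁ h₁ c₂ h₂ hne hcol => ?_⟩
  · calc R.toList.idxOf (cls c) < R.toList.length :=
          List.idxOf_lt_length_iff.2 (mem_toList.2 (hcls c hc).1)
      _ ≤ k := by rwa [length_toList]
  · have hsame : cls c₁ = cls c₂ :=
      (List.idxOf_inj (mem_toList.2 (hcls c₁ h₁).1)).1 hcol
    exact (hR _ (hcls c₁ h₁).1).2 c₁ (hcls c₁ h₁).2 c₂ (hsame ▸ (hcls c₂ h₂).2) hne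

def missingColors (C : Finset (Finset ℕ)) (k : ℕ) (col : Finset ℕ → ℕ) (p : ℕ) : Finset ℕ :=
  {i ∈ range k | ∀ c ∈ C, p ∈ c → col c ≠ i}

theorem IsProperColoring.card_missingColors_add {C : Finset (Finset ℕ)} {k : ℕ}
    {col : Finset ℕ → ℕ} (hcol : IsProperColoring C k col) (p : ℕ) :
    #(missingColors C k col p) + #{c ∈ C | p ∈ c} = k := by
  have hused : {c ∈ C | p ∈ c}.image col ⊆ range k := by
    intro i hi
    obtain ⟨c, hc, rfl⟩ := mem_image.1 hi
    exact mem_range.2 (hcol.1 c (mem_filter.1 hc).1)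
  have hinj : Set.InjOn col ↑({c ∈ C | p ∈ c} : Finset (Finset ℕ)) := by
    intro c₁ h₁ c₂ h₂ heq
    rw [coe_filter] at h₁ h₂
    by_contra hne
    exact Finset.disjoint_left.1 (hcol.2 c₁ h₁.1 c₂ h₂.1 hne heq) h₁.2 h₂.2
  have hmissing : missingColors C k col p = range k \ {c ∈ C | p ∈ c}.image col := by
    ext i
    simp only [missingColors, mem_filter, mem_sdiff, mem_image, not_exists, not_and]
    grind
  rw [hmissing, ← card_image_of_injOn hinj, card_sdiff_add_card_eq_card hused, card_range]

theorem card_missingColors {W : Finset ℕ} {C : Finset (Finset ℕ)} {k : ℕ}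
    {col : Finset ℕ → ℕ} (hWC : IsSTS W C) (hcol : IsProperColoring C k col) {p : ℕ}
    (hp : p ∈ W) : #(missingColors C k col p) = k - (#W - 1) / 2 := by
  have h₁ := hcol.card_missingColors_add p
  have h₂ := hWC.two_mul_card_blocks_mem hp
  omega

theorem exists_bijOn_missingColors {W : Finset ℕ} {C : Finset (Finset ℕ)} {k : ℕ}
    {col : Finset ℕ → ℕ} (hWC : IsSTS W C) (hcol : IsProperColoring C k col)
    {R : Finset (Finset (Finset ℕ))} (hR : #R = k - (#W - 1) / 2) :
    ∃ σ : ℕ → Finset (Finset ℕ) → ℕ, ∀ p ∈ W, Set.BijOn (σ p) R (missingColors C k col p) := by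
  choose! σ hσ using fun p (hp : p ∈ W) =>
    exists_bijOn_of_card_eq (hR.trans (card_missingColors hWC hcol hp).symm)
  exact ⟨σ, hσ⟩

theorem existsUnique_sub_mul_eq {R : Type*} [CommRing R] {s t : R} (h : IsUnit (t - s))
    (q r : R) : ∃! ad : R × R, ad.1 - s * ad.2 = q ∧ ad.1 - t * ad.2 = r := by
  obtain ⟨e, he⟩ : ∃ e : R, e * (t - s) = 1 := ⟨↑h.unit⁻¹, h.val_inv_mul⟩
  refine ⟨(q + s * (e * (q - r)), e * (q - r)), ⟨by ring, by linear_combination (r - q) * he⟩, ?_⟩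
  rintro ⟨a, d⟩ ⟨ha, hd⟩
  have hd' : d = e * (q - r) := by linear_combination e * ha - e * hd - d * he
  subst hd'
  ext
  · linear_combination ha
  · rfl

def rankIn (b : Finset ℕ) (x : ℕ) : ℕ := #{y ∈ b | y < x}

theorem rankIn_lt_rankIn {b : Finset ℕ} {x y : ℕ} (hx : x ∈ b) (hxy : x < y) :
    rankIn b x < rankIn b y := by
  refine card_lt_card ⟨fun z hz => ?_, fun h => ?_⟩
  · rw [mem_filter] at hz ⊢
    exact ⟨hz.1, hz.2.trans hxy⟩
  · exact (lt_irrefl x) (mem_filter.1 (h (mem_filter.2 ⟨hx, hxy⟩))).2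

theorem rankIn_lt_card {b : Finset ℕ} {x : ℕ} (hx : x ∈ b) : rankIn b x < #b :=
  card_lt_card ⟨filter_subset _ _, fun h => lt_irrefl x (mem_filter.1 (h hx)).2⟩

theorem isUnit_rankIn_sub {w : ℕ} (hw : Odd w) {b : Finset ℕ} (hb : #b = 3) {x y : ℕ}
    (hx : x ∈ b) (hy : y ∈ b) (hxy : x ≠ y) :
    IsUnit ((rankIn b y : ZMod w) - rankIn b x) := by
  wlog hlt : x < y generalizing x y
  · simpa using (this hy hx hxy.symm (by omega)).neg
  have hrank := rankIn_lt_rankIn hx hlt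
  have hbound := rankIn_lt_card hy
  rw [← Nat.cast_sub hrank.le, ZMod.isUnit_iff_coprime]
  obtain h | h : rankIn b y - rankIn b x = 1 ∨ rankIn b y - rankIn b x = 2 := by omega
  · rw [h]; exact Nat.coprime_one_left w
  · rw [h]; exact Nat.coprime_two_left.2 hw

variable {w : ℕ}

section Product

variable [NeZero w]

/-- The point `(x, a)` of `ℕ × ℤ/w`, encoded as `x * w + a`. -/
def pt (w : ℕ) (x : ℕ) (a : ZMod w) : ℕ := x * w + a.val

theorem pt_div (x : ℕ) (a : ZMod w) : pt w x a / w = x := by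
  rw [pt, add_comm, Nat.add_mul_div_right _ _ (NeZero.pos w), Nat.div_eq_of_lt (ZMod.val_lt a),
    zero_add]

theorem pt_mod (x : ℕ) (a : ZMod w) : pt w x a % w = a.val := by
  rw [pt, mul_comm, Nat.mul_add_mod, Nat.mod_eq_of_lt (ZMod.val_lt a)]

theorem pt_inj {x y : ℕ} {a b : ZMod w} : pt w x a = pt w y b ↔ x = y ∧ a = b := by
  refine ⟨fun h => ⟨?_, ?_⟩, ?_⟩
  · rw [← pt_div x a, h, pt_div]
  · exact ZMod.val_injective w (by rw [← pt_mod x a, h, pt_mod])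
  · rintro ⟨rfl, rfl⟩
    rfl

variable (w) in
def prodPoints (V : Finset ℕ) : Finset ℕ :=
  (V ×ˢ (univ : Finset (ZMod w))).image fun xa => pt w xa.1 xa.2

theorem mem_prodPoints {V : Finset ℕ} {e : ℕ} :
    e ∈ prodPoints w V ↔ ∃ x ∈ V, ∃ a, pt w x a = e := by
  simp [prodPoints]

theorem pt_mem_prodPoints {V : Finset ℕ} {x : ℕ} (hx : x ∈ V) (a : ZMod w) :
    pt w x a ∈ prodPoints w V :=
  mem_prodPoints.2 ⟨x, hx, a, rfl⟩

theorem card_prodPoints (V : Finset ℕ) : #(prodPoints w V) = #V * w := by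
  rw [prodPoints, card_image_of_injective _ fun _ _ h => Prod.ext_iff.2 (pt_inj.1 h),
    card_product, card_univ, ZMod.card]

theorem prodPoints_mono {U V : Finset ℕ} (h : U ⊆ V) : prodPoints w U ⊆ prodPoints w V :=
  image_subset_image (product_subset_product_left h)

def crossBlock (w : ℕ) (b : Finset ℕ) (a d : ZMod w) : Finset ℕ :=
  b.image fun x => pt w x (a - (rankIn b x : ZMod w) * d)

def fibreBlock (w : ℕ) (τ : ℕ → ZMod w) (x : ℕ) (c : Finset ℕ) : Finset ℕ :=
  c.image fun p => pt w x (τ p)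

theorem pt_mem_crossBlock {b : Finset ℕ} {a d q : ZMod w} {y : ℕ} :
    pt w y q ∈ crossBlock w b a d ↔ y ∈ b ∧ a - (rankIn b y : ZMod w) * d = q := by
  simp only [crossBlock, mem_image, pt_inj]
  grind

theorem pt_mem_fibreBlock {τ : ℕ → ZMod w} {c : Finset ℕ} {x y : ℕ} {a : ZMod w} :
    pt w y a ∈ fibreBlock w τ x c ↔ y = x ∧ ∃ p ∈ c, τ p = a := by
  simp only [fibreBlock, mem_image, pt_inj]
  grind

theorem crossBlock_subset {V b : Finset ℕ} (hb : b ⊆ V) (a d : ZMod w) :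
    crossBlock w b a d ⊆ prodPoints w V :=
  image_subset_iff.2 fun _ hx => pt_mem_prodPoints (hb hx) _

theorem fibreBlock_subset {V : Finset ℕ} {x : ℕ} (hx : x ∈ V) (τ : ℕ → ZMod w) (c : Finset ℕ) :
    fibreBlock w τ x c ⊆ prodPoints w V :=
  image_subset_iff.2 fun _ _ => pt_mem_prodPoints hx _

theorem card_crossBlock (b : Finset ℕ) (a d : ZMod w) : #(crossBlock w b a d) = #b :=
  card_image_of_injective _ fun _ _ h => (pt_inj.1 h).1

theorem card_fibreBlock {τ : ℕ → ZMod w} {c : Finset ℕ} (hτ : Set.InjOn τ c) (x : ℕ) :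
    #(fibreBlock w τ x c) = #c :=
  card_image_of_injOn fun _ hp _ hq h => hτ hp hq (pt_inj.1 h).2

theorem crossBlock_ne_fibreBlock {b : Finset ℕ} (hb : 1 < #b) (a d : ZMod w) (τ : ℕ → ZMod w)
    (x : ℕ) (c : Finset ℕ) : crossBlock w b a d ≠ fibreBlock w τ x c := by
  intro h
  obtain ⟨y₁, hy₁, y₂, hy₂, hne⟩ := one_lt_card.1 hb
  have h₁ := (pt_mem_crossBlock (q := a - (rankIn b y₁ : ZMod w) * d)).2 ⟨hy₁, rfl⟩
  have h₂ := (pt_mem_crossBlock (q := a - (rankIn b y₂ : ZMod w) * d)).2 ⟨hy₂, rfl⟩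
  rw [h, pt_mem_fibreBlock] at h₁ h₂
  exact hne (h₁.1.trans h₂.1.symm)

theorem crossBlock_inj {b b' : Finset ℕ} (hw : Odd w) (hb : #b = 3) {a a' d d' : ZMod w} :
    crossBlock w b a d = crossBlock w b' a' d' ↔ b = b' ∧ a = a' ∧ d = d' := by
  refine ⟨fun h => ?_, fun ⟨hb, ha, hd⟩ => hb ▸ ha ▸ hd ▸ rfl⟩
  have hval : ∀ y ∈ b, y ∈ b' ∧
      a' - (rankIn b' y : ZMod w) * d' = a - (rankIn b y : ZMod w) * d := fun y hy =>
    pt_mem_crossBlock.1 (h ▸ pt_mem_crossBlock.2 ⟨hy, rfl⟩)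
  have hbb : b = b' := by
    refine Subset.antisymm (fun y hy => (hval y hy).1) fun y hy => ?_
    exact (pt_mem_crossBlock.1 (h.symm ▸ pt_mem_crossBlock.2 ⟨hy, rfl⟩)).1
  subst hbb
  obtain ⟨y₁, hy₁, y₂, hy₂, hne⟩ := one_lt_card.1 (by omega : 1 < #b)
  have huniq := existsUnique_sub_mul_eq (isUnit_rankIn_sub hw hb hy₁ hy₂ hne)
    (a - (rankIn b y₁ : ZMod w) * d) (a - (rankIn b y₂ : ZMod w) * d)
  obtain ⟨rfl, rfl⟩ := Prod.ext_iff.1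
    (huniq.unique (y₁ := (a', d')) (y₂ := (a, d)) ⟨(hval y₁ hy₁).2, (hval y₂ hy₂).2⟩ ⟨rfl, rfl⟩)
  exact ⟨rfl, rfl, rfl⟩

theorem fibreBlock_inj {W : Finset ℕ} {τ : ℕ → ZMod w} (hτ : Set.InjOn τ W)
    {c c' : Finset ℕ} (hc : c ⊆ W) (hc' : c' ⊆ W) (hne : c.Nonempty) {x x' : ℕ} :
    fibreBlock w τ x c = fibreBlock w τ x' c' ↔ x = x' ∧ c = c' := by
  refine ⟨fun h => ?_, fun ⟨hx, hc⟩ => hx ▸ hc ▸ rfl⟩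
  have hmem : ∀ p ∈ c, x = x' ∧ p ∈ c' := fun p hp => by
    obtain ⟨hxx, p', hp', hτp⟩ := pt_mem_fibreBlock.1 (h ▸ pt_mem_fibreBlock.2 ⟨rfl, p, hp, rfl⟩)
    exact ⟨hxx, hτ (hc' hp') (hc hp) hτp ▸ hp'⟩
  obtain ⟨p₀, hp₀⟩ := hne
  obtain rfl := (hmem p₀ hp₀).1
  refine ⟨rfl, Subset.antisymm (fun p hp => (hmem p hp).2) fun p hp => ?_⟩
  obtain ⟨-, p', hp', hτp⟩ := pt_mem_fibreBlock.1 (h.symm ▸ pt_mem_fibreBlock.2 ⟨rfl, p, hp, rfl⟩)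
  exact hτ (hc hp') (hc' hp) hτp ▸ hp'

variable (w) in
def prodBlocks (τ : ℕ → ZMod w) (C : Finset (Finset ℕ)) (V : Finset ℕ)
    (B : Finset (Finset ℕ)) : Finset (Finset ℕ) :=
  B.biUnion (fun b => (univ : Finset (ZMod w × ZMod w)).image fun ad => crossBlock w b ad.1 ad.2)
    ∪ V.biUnion fun x => C.image (fibreBlock w τ x)

theorem mem_prodBlocks {τ : ℕ → ZMod w} {C : Finset (Finset ℕ)} {V : Finset ℕ}
    {B : Finset (Finset ℕ)} {T : Finset ℕ} :
    T ∈ prodBlocks w τ C V B ↔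
      (∃ b ∈ B, ∃ a d, crossBlock w b a d = T) ∨ ∃ x ∈ V, ∃ c ∈ C, fibreBlock w τ x c = T := by
  simp [prodBlocks]

theorem prodBlocks_mono {τ : ℕ → ZMod w} {C : Finset (Finset ℕ)} {U V : Finset ℕ}
    {A B : Finset (Finset ℕ)} (hUV : U ⊆ V) (hAB : A ⊆ B) :
    prodBlocks w τ C U A ⊆ prodBlocks w τ C V B :=
  union_subset_union (biUnion_subset_biUnion_of_subset_left _ hAB)
    (biUnion_subset_biUnion_of_subset_left _ hUV)

section STS

variable {W V : Finset ℕ} {C B : Finset (Finset ℕ)} {τ : ℕ → ZMod w}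

theorem existsUnique_prodBlock_of_fst_eq (hWC : IsSTS W C) (hτ : Set.BijOn τ W Set.univ)
    {x : ℕ} (hx : x ∈ V) {a₁ a₂ : ZMod w} (hne : a₁ ≠ a₂) :
    ∃! T, T ∈ prodBlocks w τ C V B ∧ pt w x a₁ ∈ T ∧ pt w x a₂ ∈ T := by
  obtain ⟨p₁, hp₁, rfl⟩ := hτ.surjOn (Set.mem_univ a₁)
  obtain ⟨p₂, hp₂, rfl⟩ := hτ.surjOn (Set.mem_univ a₂)
  obtain ⟨c, ⟨hc, hp₁c, hp₂c⟩, hcuniq⟩ := hWC.2 p₁ hp₁ p₂ hp₂ fun h => hne (h ▸ rfl)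
  refine ⟨fibreBlock w τ x c, ⟨mem_prodBlocks.2 (.inr ⟨x, hx, c, hc, rfl⟩),
    pt_mem_fibreBlock.2 ⟨rfl, p₁, hp₁c, rfl⟩, pt_mem_fibreBlock.2 ⟨rfl, p₂, hp₂c, rfl⟩⟩, ?_⟩
  rintro T ⟨hT, h₁, h₂⟩
  rcases mem_prodBlocks.1 hT with ⟨b, -, a, d, rfl⟩ | ⟨x', -, c', hc', rfl⟩
  · exact absurd ((pt_mem_crossBlock.1 h₁).2.symm.trans (pt_mem_crossBlock.1 h₂).2) hne
  · obtain ⟨rfl, q₁, hq₁, hτq₁⟩ := pt_mem_fibreBlock.1 h₁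
    obtain ⟨-, q₂, hq₂, hτq₂⟩ := pt_mem_fibreBlock.1 h₂
    have hc'W := (hWC.1 c' hc').1
    obtain rfl := hτ.injOn (hc'W hq₁) hp₁ hτq₁
    obtain rfl := hτ.injOn (hc'W hq₂) hp₂ hτq₂
    rw [hcuniq c' ⟨hc', hq₁, hq₂⟩]

theorem existsUnique_prodBlock_of_fst_ne (hw : Odd w) (hS : IsSTS V B) {x₁ x₂ : ℕ}
    (hx₁ : x₁ ∈ V) (hx₂ : x₂ ∈ V) (hne : x₁ ≠ x₂) (a₁ a₂ : ZMod w) :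
    ∃! T, T ∈ prodBlocks w τ C V B ∧ pt w x₁ a₁ ∈ T ∧ pt w x₂ a₂ ∈ T := by
  obtain ⟨b, ⟨hb, hx₁b, hx₂b⟩, hbuniq⟩ := hS.2 x₁ hx₁ x₂ hx₂ hne
  have hb3 := (hS.1 b hb).2
  obtain ⟨⟨a, d⟩, ⟨had₁, had₂⟩, haduniq⟩ :=
    existsUnique_sub_mul_eq (isUnit_rankIn_sub hw hb3 hx₁b hx₂b hne) a₁ a₂
  refine ⟨crossBlock w b a d, ⟨mem_prodBlocks.2 (.inl ⟨b, hb, a, d, rfl⟩),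
    pt_mem_crossBlock.2 ⟨hx₁b, had₁⟩, pt_mem_crossBlock.2 ⟨hx₂b, had₂⟩⟩, ?_⟩
  rintro T ⟨hT, h₁, h₂⟩
  rcases mem_prodBlocks.1 hT with ⟨b', hb', a', d', rfl⟩ | ⟨x', -, c', -, rfl⟩
  · obtain ⟨hx₁b', ha'₁⟩ := pt_mem_crossBlock.1 h₁
    obtain ⟨hx₂b', ha'₂⟩ := pt_mem_crossBlock.1 h₂
    obtain rfl := hbuniq b' ⟨hb', hx₁b', hx₂b'⟩
    obtain ⟨rfl, rfl⟩ := Prod.ext_iff.1 (haduniq (a', d') ⟨ha'₁, ha'₂⟩)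
    rfl
  · exact absurd ((pt_mem_fibreBlock.1 h₁).1.trans (pt_mem_fibreBlock.1 h₂).1.symm) hne

theorem isSTS_prodBlocks (hw : Odd w) (hWC : IsSTS W C) (hτ : Set.BijOn τ W Set.univ)
    (hS : IsSTS V B) : IsSTS (prodPoints w V) (prodBlocks w τ C V B) := by
  refine ⟨fun T hT => ?_, fun e₁ he₁ e₂ he₂ hne => ?_⟩
  · rcases mem_prodBlocks.1 hT with ⟨b, hb, a, d, rfl⟩ | ⟨x, hx, c, hc, rfl⟩
    · exact ⟨crossBlock_subset (hS.1 b hb).1 a d, (card_crossBlock b a d).trans (hS.1 b hb).2⟩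
    · exact ⟨fibreBlock_subset hx τ c,
        (card_fibreBlock (hτ.injOn.mono (hWC.1 c hc).1) x).trans (hWC.1 c hc).2⟩
  obtain ⟨x₁, hx₁, a₁, rfl⟩ := mem_prodPoints.1 he₁
  obtain ⟨x₂, hx₂, a₂, rfl⟩ := mem_prodPoints.1 he₂
  by_cases hx : x₁ = x₂
  · subst hx
    exact existsUnique_prodBlock_of_fst_eq hWC hτ hx₁ fun h => hne (h ▸ rfl)
  · exact existsUnique_prodBlock_of_fst_ne hw hS hx₁ hx₂ hx a₁ a₂

end STS

end Product

section Resolution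

variable (w) in
def hybridClass (τ : ℕ → ZMod w) (C : Finset (Finset ℕ)) (col : Finset ℕ → ℕ)
    (σ : ℕ → Finset (Finset ℕ) → ℕ) (W V : Finset ℕ) (R : Finset (Finset (Finset ℕ)))
    (i : ℕ) : Finset (Finset ℕ) :=
  V.biUnion (fun x => {c ∈ C | col c = i}.image (fibreBlock w τ x)) ∪
    R.biUnion fun P => P.biUnion fun b =>
      {p ∈ W | σ p P = i}.image fun p => crossBlock w b (τ p) 0

variable {τ : ℕ → ZMod w} {C : Finset (Finset ℕ)} {col : Finset ℕ → ℕ}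
  {σ : ℕ → Finset (Finset ℕ) → ℕ} {W V : Finset ℕ} {B : Finset (Finset ℕ)}
  {R : Finset (Finset (Finset ℕ))} {k : ℕ}

theorem mem_hybridClass {i : ℕ} {T : Finset ℕ} :
    T ∈ hybridClass w τ C col σ W V R i ↔
      (∃ x ∈ V, ∃ c ∈ C, col c = i ∧ fibreBlock w τ x c = T) ∨
        ∃ P ∈ R, ∃ b ∈ P, ∃ p ∈ W, σ p P = i ∧ crossBlock w b (τ p) 0 = T := by
  simp only [hybridClass, mem_union, mem_biUnion, mem_image, mem_filter, and_assoc]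

variable [NeZero w]

variable (w) in
def shiftClass (P : Finset (Finset ℕ)) (d : ZMod w) : Finset (Finset ℕ) :=
  P.biUnion fun b => univ.image fun a => crossBlock w b a d

variable (w) in
def prodResolution (τ : ℕ → ZMod w) (C : Finset (Finset ℕ)) (col : Finset ℕ → ℕ)
    (σ : ℕ → Finset (Finset ℕ) → ℕ) (W V : Finset ℕ) (R : Finset (Finset (Finset ℕ)))
    (k : ℕ) : Finset (Finset (Finset ℕ)) :=
  (range k).image (hybridClass w τ C col σ W V R) ∪
    (R ×ˢ univ.erase 0).image fun Pd => shiftClass w Pd.1 Pd.2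

theorem mem_shiftClass {P : Finset (Finset ℕ)} {d : ZMod w} {T : Finset ℕ} :
    T ∈ shiftClass w P d ↔ ∃ b ∈ P, ∃ a, crossBlock w b a d = T := by
  simp [shiftClass]

theorem mem_prodResolution {K : Finset (Finset ℕ)} :
    K ∈ prodResolution w τ C col σ W V R k ↔
      (∃ i < k, hybridClass w τ C col σ W V R i = K) ∨
        ∃ P ∈ R, ∃ d ≠ 0, shiftClass w P d = K := by
  simp [prodResolution, and_assoc]

theorem mem_hybridClass_of_pt_mem (hWC : IsSTS W C) (hτ : Set.InjOn τ W) {p : ℕ} (hp : p ∈ W)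
    {x i : ℕ} {T : Finset ℕ} (hT : T ∈ hybridClass w τ C col σ W V R i)
    (he : pt w x (τ p) ∈ T) :
    (∃ c ∈ C, p ∈ c ∧ col c = i ∧ fibreBlock w τ x c = T) ∨
      ∃ P ∈ R, ∃ b ∈ P, x ∈ b ∧ σ p P = i ∧ crossBlock w b (τ p) 0 = T := by
  rcases mem_hybridClass.1 hT with ⟨x', -, c, hc, hci, rfl⟩ | ⟨P, hP, b, hb, p', hp', hσ, rfl⟩
  · obtain ⟨rfl, q, hq, hτq⟩ := pt_mem_fibreBlock.1 he
    obtain rfl := hτ ((hWC.1 c hc).1 hq) hp hτq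
    exact .inl ⟨c, hc, hq, hci, rfl⟩
  · obtain ⟨hxb, hτp⟩ := pt_mem_crossBlock.1 he
    rw [mul_zero, sub_zero] at hτp
    obtain rfl := hτ hp' hp hτp
    exact .inr ⟨P, hP, b, hb, hxb, hσ, rfl⟩

theorem exists_mem_hybridClass (hτ : Set.BijOn τ W Set.univ) (hR : IsResolution V B R)
    (hσ : ∀ p ∈ W, Set.BijOn (σ p) R (missingColors C k col p)) {i : ℕ} (hi : i < k)
    {e : ℕ} (he : e ∈ prodPoints w V) : ∃ T ∈ hybridClass w τ C col σ W V R i, e ∈ T := by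
  obtain ⟨x, hx, a, rfl⟩ := mem_prodPoints.1 he
  obtain ⟨p, hp, rfl⟩ := hτ.surjOn (Set.mem_univ a)
  by_cases hused : ∃ c ∈ C, p ∈ c ∧ col c = i
  · obtain ⟨c, hc, hpc, hci⟩ := hused
    exact ⟨fibreBlock w τ x c, mem_hybridClass.2 (.inl ⟨x, hx, c, hc, hci, rfl⟩),
      pt_mem_fibreBlock.2 ⟨rfl, p, hpc, rfl⟩⟩
  · have him : i ∈ missingColors C k col p :=
      mem_filter.2 ⟨mem_range.2 hi, fun c hc hpc hci => hused ⟨c, hc, hpc, hci⟩⟩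
    obtain ⟨P, hP, hσP⟩ := (hσ p hp).surjOn him
    obtain ⟨b, ⟨hb, hxb⟩, -⟩ := (hR.1 P hP).2.2 x hx
    exact ⟨crossBlock w b (τ p) 0, mem_hybridClass.2 (.inr ⟨P, hP, b, hb, p, hp, hσP, rfl⟩),
      pt_mem_crossBlock.2 ⟨hxb, by rw [mul_zero, sub_zero]⟩⟩

theorem isParallelClassOn_hybridClass (hWC : IsSTS W C) (hτ : Set.BijOn τ W Set.univ)
    (hcol : IsProperColoring C k col) (hR : IsResolution V B R)
    (hσ : ∀ p ∈ W, Set.BijOn (σ p) R (missingColors C k col p)) {i : ℕ} (hi : i < k) :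
    IsParallelClassOn (prodPoints w V) (hybridClass w τ C col σ W V R i) := by
  refine .of_cover (fun T hT => ?_) (fun e he => exists_mem_hybridClass hτ hR hσ hi he)
    fun T₁ hT₁ T₂ hT₂ e he h₁ h₂ => ?_
  · rcases mem_hybridClass.1 hT with ⟨x, hx, c, -, -, rfl⟩ | ⟨P, hP, b, hb, p, -, -, rfl⟩
    · exact fibreBlock_subset hx τ c
    · exact crossBlock_subset ((hR.1 P hP).2.1 b hb) _ _
  obtain ⟨x, hx, a, rfl⟩ := mem_prodPoints.1 he
  obtain ⟨p, hp, rfl⟩ := hτ.surjOn (Set.mem_univ a)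
  have hmissing : ∀ P ∈ R, ∀ c ∈ C, p ∈ c → col c ≠ σ p P := fun P hP =>
    (mem_filter.1 ((hσ p hp).mapsTo hP)).2
  rcases mem_hybridClass_of_pt_mem hWC hτ.injOn hp hT₁ h₁ with
      ⟨c₁, hc₁, hpc₁, hci₁, rfl⟩ | ⟨P₁, hP₁, b₁, hb₁, hxb₁, hσ₁, rfl⟩ <;>
    rcases mem_hybridClass_of_pt_mem hWC hτ.injOn hp hT₂ h₂ with
      ⟨c₂, hc₂, hpc₂, hci₂, rfl⟩ | ⟨P₂, hP₂, b₂, hb₂, hxb₂, hσ₂, rfl⟩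
  · obtain rfl : c₁ = c₂ := by
      by_contra hne
      exact Finset.disjoint_left.1 (hcol.2 c₁ hc₁ c₂ hc₂ hne (hci₁.trans hci₂.symm)) hpc₁ hpc₂
    rfl
  · exact absurd (hci₁.trans hσ₂.symm) (hmissing P₂ hP₂ c₁ hc₁ hpc₁)
  · exact absurd (hci₂.trans hσ₁.symm) (hmissing P₁ hP₁ c₂ hc₂ hpc₂)
  · obtain rfl := (hσ p hp).injOn hP₁ hP₂ (hσ₁.trans hσ₂.symm)
    obtain rfl := ((hR.1 P₁ hP₁).2.2 x hx).unique ⟨hb₁, hxb₁⟩ ⟨hb₂, hxb₂⟩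
    rfl

theorem isParallelClassOn_shiftClass {P : Finset (Finset ℕ)} (hP : IsParallelClassOn V P)
    (d : ZMod w) : IsParallelClassOn (prodPoints w V) (shiftClass w P d) := by
  refine .of_cover (fun T hT => ?_) (fun e he => ?_) fun T₁ hT₁ T₂ hT₂ e he h₁ h₂ => ?_
  · obtain ⟨b, hb, a, rfl⟩ := mem_shiftClass.1 hT
    exact crossBlock_subset (hP.1 b hb) a d
  · obtain ⟨x, hx, q, rfl⟩ := mem_prodPoints.1 he
    obtain ⟨b, ⟨hb, hxb⟩, -⟩ := hP.2 x hx
    exact ⟨crossBlock w b (q + rankIn b x * d) d, mem_shiftClass.2 ⟨b, hb, _, rfl⟩,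
      pt_mem_crossBlock.2 ⟨hxb, by ring⟩⟩
  · obtain ⟨x, hx, q, rfl⟩ := mem_prodPoints.1 he
    obtain ⟨b₁, hb₁, a₁, rfl⟩ := mem_shiftClass.1 hT₁
    obtain ⟨b₂, hb₂, a₂, rfl⟩ := mem_shiftClass.1 hT₂
    obtain ⟨hxb₁, ha₁⟩ := pt_mem_crossBlock.1 h₁
    obtain ⟨hxb₂, ha₂⟩ := pt_mem_crossBlock.1 h₂
    obtain rfl := (hP.2 x hx).unique ⟨hb₁, hxb₁⟩ ⟨hb₂, hxb₂⟩
    obtain rfl : a₁ = a₂ := by linear_combination ha₁ - ha₂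
    rfl

theorem hybridClass_subset_prodBlocks (hR : IsResolution V B R) (i : ℕ) :
    hybridClass w τ C col σ W V R i ⊆ prodBlocks w τ C V B := by
  intro T hT
  rcases mem_hybridClass.1 hT with ⟨x, hx, c, hc, -, rfl⟩ | ⟨P, hP, b, hb, p, -, -, rfl⟩
  · exact mem_prodBlocks.2 (.inr ⟨x, hx, c, hc, rfl⟩)
  · exact mem_prodBlocks.2 (.inl ⟨b, (hR.1 P hP).1 hb, _, _, rfl⟩)

theorem shiftClass_subset_prodBlocks {P : Finset (Finset ℕ)} (hPB : P ⊆ B) (d : ZMod w) :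
    shiftClass w P d ⊆ prodBlocks w τ C V B := by
  intro T hT
  obtain ⟨b, hb, a, rfl⟩ := mem_shiftClass.1 hT
  exact mem_prodBlocks.2 (.inl ⟨b, hPB hb, a, d, rfl⟩)

theorem eq_of_mem_hybridClass (hw : Odd w) (hWC : IsSTS W C) (hτ : Set.InjOn τ W)
    (hS : IsSTS V B) (hR : IsResolution V B R) {T : Finset ℕ} {i j : ℕ}
    (hi : T ∈ hybridClass w τ C col σ W V R i) (hj : T ∈ hybridClass w τ C col σ W V R j) :
    i = j := by
  have hcard : ∀ P ∈ R, ∀ b ∈ P, #b = 3 := fun P hP b hb => (hS.1 b ((hR.1 P hP).1 hb)).2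
  rcases mem_hybridClass.1 hi with
      ⟨x₁, -, c₁, hc₁, rfl, rfl⟩ | ⟨P₁, hP₁, b₁, hb₁, p₁, hp₁, rfl, rfl⟩ <;>
    rcases mem_hybridClass.1 hj with
      ⟨x₂, -, c₂, hc₂, rfl, h⟩ | ⟨P₂, hP₂, b₂, hb₂, p₂, hp₂, rfl, h⟩
  · have hne : c₂.Nonempty := card_pos.1 (by simp [(hWC.1 c₂ hc₂).2])
    obtain ⟨-, rfl⟩ := (fibreBlock_inj hτ (hWC.1 c₂ hc₂).1 (hWC.1 c₁ hc₁).1 hne).1 h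
    rfl
  · exact absurd h (crossBlock_ne_fibreBlock (by simp [hcard P₂ hP₂ b₂ hb₂]) _ _ τ x₁ c₁)
  · exact absurd h.symm (crossBlock_ne_fibreBlock (by simp [hcard P₁ hP₁ b₁ hb₁]) _ _ τ x₂ c₂)
  · obtain ⟨rfl, hτp, -⟩ := (crossBlock_inj hw (hcard P₂ hP₂ b₂ hb₂)).1 h
    obtain rfl := hτ hp₂ hp₁ hτp
    obtain rfl := (hR.2 b₂ ((hR.1 P₂ hP₂).1 hb₂)).unique ⟨hP₁, hb₁⟩ ⟨hP₂, hb₂⟩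
    rfl

theorem notMem_hybridClass_of_mem_shiftClass (hw : Odd w) (hS : IsSTS V B)
    (hR : IsResolution V B R) {P : Finset (Finset ℕ)} (hP : P ∈ R) {d : ZMod w} (hd : d ≠ 0)
    {T : Finset ℕ} (hT : T ∈ shiftClass w P d) (i : ℕ) :
    T ∉ hybridClass w τ C col σ W V R i := by
  obtain ⟨b, hb, a, rfl⟩ := mem_shiftClass.1 hT
  intro h
  rcases mem_hybridClass.1 h with ⟨x, -, c, -, -, h⟩ | ⟨P', hP', b', hb', p, -, -, h⟩
  · exact crossBlock_ne_fibreBlock (by simp [(hS.1 b ((hR.1 P hP).1 hb)).2]) a d τ x c h.symm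
  · exact hd ((crossBlock_inj hw (hS.1 b' ((hR.1 P' hP').1 hb')).2).1 h).2.2.symm

theorem eq_of_mem_shiftClass (hw : Odd w) (hS : IsSTS V B) (hR : IsResolution V B R)
    {P P' : Finset (Finset ℕ)} (hP : P ∈ R) (hP' : P' ∈ R) {d d' : ZMod w} {T : Finset ℕ}
    (hT : T ∈ shiftClass w P d) (hT' : T ∈ shiftClass w P' d') : P = P' ∧ d = d' := by
  obtain ⟨b, hb, a, rfl⟩ := mem_shiftClass.1 hT
  obtain ⟨b', hb', a', h⟩ := mem_shiftClass.1 hT'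
  obtain ⟨rfl, -, rfl⟩ := (crossBlock_inj hw (hS.1 b' ((hR.1 P' hP').1 hb')).2).1 h
  exact ⟨(hR.2 b' ((hR.1 P hP).1 hb)).unique ⟨hP, hb⟩ ⟨hP', hb'⟩, rfl⟩

theorem exists_mem_prodResolution (hτ : Set.BijOn τ W Set.univ)
    (hcol : IsProperColoring C k col) (hR : IsResolution V B R)
    (hσ : ∀ p ∈ W, Set.BijOn (σ p) R (missingColors C k col p)) {T : Finset ℕ}
    (hT : T ∈ prodBlocks w τ C V B) : ∃ K ∈ prodResolution w τ C col σ W V R k, T ∈ K := by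
  rcases mem_prodBlocks.1 hT with ⟨b, hb, a, d, rfl⟩ | ⟨x, hx, c, hc, rfl⟩
  · obtain ⟨P, ⟨hP, hbP⟩, -⟩ := hR.2 b hb
    by_cases hd : d = 0
    · subst hd
      obtain ⟨p, hp, rfl⟩ := hτ.surjOn (Set.mem_univ a)
      have hσk : σ p P < k := mem_range.1 (mem_filter.1 ((hσ p hp).mapsTo hP)).1
      exact ⟨_, mem_prodResolution.2 (.inl ⟨σ p P, hσk, rfl⟩),
        mem_hybridClass.2 (.inr ⟨P, hP, b, hbP, p, hp, rfl, rfl⟩)⟩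
    · exact ⟨_, mem_prodResolution.2 (.inr ⟨P, hP, d, hd, rfl⟩),
        mem_shiftClass.2 ⟨b, hbP, a, rfl⟩⟩
  · exact ⟨_, mem_prodResolution.2 (.inl ⟨col c, hcol.1 c hc, rfl⟩),
      mem_hybridClass.2 (.inl ⟨x, hx, c, hc, rfl, rfl⟩)⟩

theorem eq_of_mem_prodResolution (hw : Odd w) (hWC : IsSTS W C) (hτ : Set.InjOn τ W)
    (hS : IsSTS V B) (hR : IsResolution V B R) {K₁ K₂ : Finset (Finset ℕ)}
    (hK₁ : K₁ ∈ prodResolution w τ C col σ W V R k)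
    (hK₂ : K₂ ∈ prodResolution w τ C col σ W V R k) {T : Finset ℕ} (h₁ : T ∈ K₁)
    (h₂ : T ∈ K₂) : K₁ = K₂ := by
  rcases mem_prodResolution.1 hK₁ with ⟨i, -, rfl⟩ | ⟨P, hP, d, hd, rfl⟩ <;>
    rcases mem_prodResolution.1 hK₂ with ⟨j, -, rfl⟩ | ⟨P', hP', d', hd', rfl⟩
  · rw [eq_of_mem_hybridClass hw hWC hτ hS hR h₁ h₂]
  · exact absurd h₁ (notMem_hybridClass_of_mem_shiftClass hw hS hR hP' hd' h₂ i)
  · exact absurd h₂ (notMem_hybridClass_of_mem_shiftClass hw hS hR hP hd h₁ j)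
  · obtain ⟨rfl, rfl⟩ := eq_of_mem_shiftClass hw hS hR hP hP' h₁ h₂
    rfl

theorem isResolution_prodResolution (hw : Odd w) (hWC : IsSTS W C)
    (hτ : Set.BijOn τ W Set.univ) (hcol : IsProperColoring C k col) (hS : IsSTS V B)
    (hR : IsResolution V B R) (hσ : ∀ p ∈ W, Set.BijOn (σ p) R (missingColors C k col p)) :
    IsResolution (prodPoints w V) (prodBlocks w τ C V B)
      (prodResolution w τ C col σ W V R k) := by
  refine ⟨fun K hK => ?_, fun T hT => ?_⟩
  · rcases mem_prodResolution.1 hK with ⟨i, hi, rfl⟩ | ⟨P, hP, d, -, rfl⟩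
    · exact ⟨hybridClass_subset_prodBlocks hR i,
        isParallelClassOn_hybridClass hWC hτ hcol hR hσ hi⟩
    · exact ⟨shiftClass_subset_prodBlocks (hR.1 P hP).1 d,
        isParallelClassOn_shiftClass (hR.1 P hP).2 d⟩
  · obtain ⟨K, hK, hTK⟩ := exists_mem_prodResolution hτ hcol hR hσ hT
    exact ⟨K, ⟨hK, hTK⟩, fun K' ⟨hK', hTK'⟩ =>
      eq_of_mem_prodResolution hw hWC hτ.injOn hS hR hK' hK hTK' hTK⟩

end Resolution

end KirkmanProduct

open KirkmanProduct in
theorem stmt15_general (v w : ℕ) (hodd : Odd w)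
    (h1 : ExistsKTSSubSTS (2 * v + 1) v)
    (h3 : ∃ (W : Finset ℕ) (C : Finset (Finset ℕ)),
      IsSTS W C ∧ W.card = w ∧ ChromIndexLE C ((w - 1) / 2 + v)) :
    ExistsKTSSubSTS (2 * v * w + w) (v * w) := by
  have : NeZero w := ⟨hodd.pos.ne'⟩
  obtain ⟨V, U, B, A, ⟨hVB, R, hR⟩, hUA, hUV, hAB, hV, hU⟩ := h1
  obtain ⟨W, C, hWC, hW, hC⟩ := h3
  obtain ⟨τ, hτ⟩ : ∃ τ : ℕ → ZMod w, Set.BijOn τ W Set.univ := by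
    simpa using exists_bijOn_of_card_eq (t := (univ : Finset (ZMod w))) (by simp [hW])
  obtain ⟨col, hcol⟩ := exists_isProperColoring hC
  obtain ⟨σ, hσ⟩ := exists_bijOn_missingColors hWC hcol (R := R)
    (by rw [hR.card_eq_of_isSTS hVB hV, hW]; omega)
  refine ⟨prodPoints w V, prodPoints w U, prodBlocks w τ C V B, prodBlocks w τ C U A,
    ⟨isSTS_prodBlocks hodd hWC hτ hVB, _, isResolution_prodResolution hodd hWC hτ hcol hVB hR hσ⟩,
    isSTS_prodBlocks hodd hWC hτ hUA, prodPoints_mono hUV, prodBlocks_mono hUV hAB, ?_, ?_⟩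
  · rw [card_prodPoints, hV]
    ring
  · rw [card_prodPoints, hU]

/-- If there exist an MK(2v+1), an RTD(3,w) and an STS(w) of chromatic index at
most (w-1)/2 + v, then there exists a KTS(2vw+w) containing an STS(vw). -/
theorem stmt15 (v w : ℕ) (hv : 0 < v) (hw : 0 < w) (hodd : Odd w)
    (h1 : ExistsKTSSubSTS (2 * v + 1) v) (h2 : ExistsRTD3 w)
    (h3 : ∃ (W : Finset ℕ) (C : Finset (Finset ℕ)),
      IsSTS W C ∧ W.card = w ∧ ChromIndexLE C ((w - 1) / 2 + v)) :
    ExistsKTSSubSTS (2 * v * w + w) (v * w) :=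
  stmt15_general v w hodd h1 h3
end
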